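/- arXiv:2207.10545 — 5 statements merged into one kernel-verified Lean document; each statement's English description precedes it below -/
import Mathlib

section
/- (Dependent random choice for k-partite graphs.) Let k ≥ 2 and t ≥ 2 be fixed integers and let 0 < γ < 1 and 0 < c < 1 be fixed reals. There exists n₀ = n₀(k,t,γ,c) such that the following holds for all n ≥ n₀. Let G be a k-partite graph with parts Z₁, …, Z_k, each of size n, such that every vertex v ∈ Z_k satisfies |N(v, Z_i)| ≥ γ·n for every i ∈ {1,…,k−1}. Then there exists a set S ⊆ Z_k with |S| ≥ (1/2)·n^{1−c} such that every t-element subset T ⊆ S satisfies |N(T, Z_i)| ≥ γ^{2(k−1)(t+1)/c}·n for every i ∈ {1,…,k−1}. -/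
open Finset

/-- `commonNbrs G T Z` is the set of vertices of `Z` adjacent to every vertex of `T`. -/
noncomputable def commonNbrs {V : Type*} (G : SimpleGraph V) (T Z : Finset V) : Finset V :=
  by classical exact Z.filter fun z => ∀ v ∈ T, G.Adj v z

lemma commonNbrs_subset {V : Type*} (G : SimpleGraph V) (T Z : Finset V) :
    commonNbrs G T Z ⊆ Z := by
  classical
  simp only [commonNbrs]
  exact Finset.filter_subset _ _

lemma mem_commonNbrs {V : Type*} (G : SimpleGraph V) (T Z : Finset V) (z : V) :
    z ∈ commonNbrs G T Z ↔ z ∈ Z ∧ ∀ v ∈ T, G.Adj v z := by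
  classical
  simp only [commonNbrs]
  rw [Finset.mem_filter]

/-- counting lemma: the number of tuples in a product finset landing in given subsets
is the product of the cards. -/
lemma card_filter_piFinset {ι : Type*} [Fintype ι] [DecidableEq ι] {V : Type*}
    (F G : ι → Finset V) (h : ∀ p, G p ⊆ F p) (pred : (ι → V) → Prop) [DecidablePred pred]
    (hpred : ∀ ω ∈ Fintype.piFinset F, (pred ω ↔ ∀ p, ω p ∈ G p)) :
    ((Fintype.piFinset F).filter pred).card = ∏ p, (G p).card := by
  classical
  rw [← Fintype.card_piFinset]
  congr 1
  ext ω
  simp only [Finset.mem_filter, Fintype.mem_piFinset]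
  constructor
  · rintro ⟨h1, h2⟩
    exact (hpred ω (Fintype.mem_piFinset.mpr h1)).mp h2
  · intro h2
    have h1 : ∀ p, ω p ∈ F p := fun p => h p (h2 p)
    exact ⟨h1, (hpred ω (Fintype.mem_piFinset.mpr h1)).mpr h2⟩

set_option maxHeartbeats 1600000

theorem dependent_random_choice_kpartite
    (k t : ℕ) (hk : 2 ≤ k) (ht : 2 ≤ t) (γ c : ℝ)
    (hγ0 : 0 < γ) (hγ1 : γ < 1) (hc0 : 0 < c) (hc1 : c < 1) :
    ∃ n₀ : ℕ, ∀ n : ℕ, n₀ ≤ n →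
      ∀ (V : Type) (G : SimpleGraph V) (Z : Fin k → Finset V),
        (∀ i j : Fin k, i ≠ j → Disjoint (Z i) (Z j)) →
        (∀ v : V, ∃ i : Fin k, v ∈ Z i) →
        (∀ i : Fin k, ∀ v ∈ Z i, ∀ w ∈ Z i, ¬ G.Adj v w) →
        (∀ i : Fin k, (Z i).card = n) →
        (∀ v ∈ Z ⟨k - 1, by omega⟩, ∀ i : Fin k, (i : ℕ) < k - 1 →
          γ * n ≤ ((commonNbrs G {v} (Z i)).card : ℝ)) →
        ∃ S ⊆ Z ⟨k - 1, by omega⟩,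
          (1 / 2 : ℝ) * (n : ℝ) ^ ((1 : ℝ) - c) ≤ (S.card : ℝ) ∧
          ∀ T ⊆ S, T.card = t → ∀ i : Fin k, (i : ℕ) < k - 1 →
            γ ^ ((2 * ((k : ℝ) - 1) * ((t : ℝ) + 1)) / c) * n ≤
              ((commonNbrs G T (Z i)).card : ℝ) := by
  classical
  set e : ℝ := (2 * ((k : ℝ) - 1) * ((t : ℝ) + 1)) / c with he
  set β : ℝ := γ ^ e with hβ
  have hkR : (1 : ℝ) ≤ (k : ℝ) - 1 := by
    have : (2 : ℝ) ≤ (k : ℝ) := by exact_mod_cast hk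
    linarith
  have hβpos : 0 < β := Real.rpow_pos_of_pos hγ0 e
  set L : ℝ := Real.log (1 / γ) with hL
  have hLpos : 0 < L := Real.log_pos (by rw [lt_div_iff₀ hγ0]; linarith)
  have hlogγ : Real.log γ = -L := by
    rw [hL, one_div, Real.log_inv]; ring
  refine ⟨max 2 ⌈((1 / γ) ^ (2 * ((k : ℝ) - 1) / c) : ℝ)⌉₊, ?_⟩
  intro n hn V G Z hdisj hcover hindep hcard hdeg
  have hn2 : 2 ≤ n := le_trans (le_max_left _ _) hn
  have hn0 : (0 : ℝ) < n := by positivity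
  have hn1 : (1 : ℝ) ≤ n := by exact_mod_cast (by omega : 1 ≤ n)
  have hnγ : ((1 / γ) ^ (2 * ((k : ℝ) - 1) / c) : ℝ) ≤ n := by
    calc ((1 / γ) ^ (2 * ((k : ℝ) - 1) / c) : ℝ) ≤ ⌈((1 / γ) ^ (2 * ((k : ℝ) - 1) / c) : ℝ)⌉₊ :=
          Nat.le_ceil _
      _ ≤ n := by exact_mod_cast le_trans (le_max_right _ _) hn
  -- the number of random picks
  set x : ℝ := c * Real.log n / (2 * ((k : ℝ) - 1) * L) with hx
  have hxpos : 0 < x := by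
    apply div_pos
    · apply mul_pos hc0
      apply Real.log_pos
      exact_mod_cast (by omega : 1 < n)
    · positivity
  set s : ℕ := ⌈x⌉₊ with hs
  have hs1 : 1 ≤ s := Nat.one_le_ceil_iff.mpr hxpos
  have hsx : x ≤ s := Nat.le_ceil x
  have hsx' : (s : ℝ) ≤ x + 1 := le_of_lt (Nat.ceil_lt_add_one hxpos.le)
  -- key analytic estimates
  have hk1 : ((k : ℝ) - 1) ≠ 0 := by linarith
  have key1 : γ ^ (((k : ℝ) - 1) * s) ≥ γ ^ ((k : ℝ) - 1) * (n : ℝ) ^ (-(c / 2)) := by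
    have h1 : ((k : ℝ) - 1) * s ≤ ((k : ℝ) - 1) * (x + 1) :=
      mul_le_mul_of_nonneg_left hsx' (by linarith)
    have h2 : γ ^ (((k : ℝ) - 1) * (x + 1)) ≤ γ ^ (((k : ℝ) - 1) * (s : ℝ)) :=
      Real.rpow_le_rpow_of_exponent_ge hγ0 hγ1.le h1
    have h3 : γ ^ (((k : ℝ) - 1) * (x + 1)) = γ ^ (((k : ℝ) - 1) * x) * γ ^ ((k : ℝ) - 1) := by
      rw [← Real.rpow_add hγ0]; ring_nf
    have h4 : γ ^ (((k : ℝ) - 1) * x) = (n : ℝ) ^ (-(c / 2)) := by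
      rw [Real.rpow_def_of_pos hγ0, Real.rpow_def_of_pos hn0, hlogγ]
      congr 1
      rw [hx]
      field_simp
    rw [ge_iff_le]
    calc γ ^ ((k : ℝ) - 1) * (n : ℝ) ^ (-(c / 2)) = γ ^ (((k : ℝ) - 1) * (x + 1)) := by
          rw [h3, h4]; ring
      _ ≤ γ ^ (((k : ℝ) - 1) * (s : ℝ)) := h2
  have he0 : 0 < e := div_pos (by nlinarith) hc0
  have key2 : β ^ s ≤ (n : ℝ) ^ (-((t : ℝ) + 1)) := by
    have hbs : β ^ s = γ ^ (e * s) := by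
      rw [hβ, ← Real.rpow_natCast (γ ^ e) s, ← Real.rpow_mul hγ0.le]
    have h1 : ((t : ℝ) + 1) * Real.log n / L ≤ e * s := by
      calc ((t : ℝ) + 1) * Real.log n / L = e * x := by
            rw [he, hx]; field_simp
        _ ≤ e * s := mul_le_mul_of_nonneg_left hsx he0.le
    have h2 : γ ^ (e * (s : ℝ)) ≤ γ ^ (((t : ℝ) + 1) * Real.log n / L) :=
      Real.rpow_le_rpow_of_exponent_ge hγ0 hγ1.le h1
    have h3 : γ ^ (((t : ℝ) + 1) * Real.log n / L) = (n : ℝ) ^ (-((t : ℝ) + 1)) := by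
      rw [Real.rpow_def_of_pos hγ0, Real.rpow_def_of_pos hn0, hlogγ]
      congr 1
      field_simp
    rw [hbs]
    exact h3 ▸ h2
  have key3 : (1 : ℝ) ≤ γ ^ ((k : ℝ) - 1) * (n : ℝ) ^ (c / 2) := by
    have h1 : ((1 / γ) ^ (2 * ((k : ℝ) - 1) / c)) ^ (c / 2) ≤ (n : ℝ) ^ (c / 2) :=
      Real.rpow_le_rpow (by positivity) hnγ (by positivity)
    have h2 : ((1 / γ : ℝ) ^ (2 * ((k : ℝ) - 1) / c)) ^ (c / 2) = (1 / γ) ^ ((k : ℝ) - 1) := by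
      rw [← Real.rpow_mul (by positivity)]
      congr 1
      field_simp
    have h3 : γ ^ ((k : ℝ) - 1) * (1 / γ : ℝ) ^ ((k : ℝ) - 1) = 1 := by
      rw [← Real.mul_rpow hγ0.le (by positivity), mul_one_div, div_self hγ0.ne',
        Real.one_rpow]
    calc (1 : ℝ) = γ ^ ((k : ℝ) - 1) * (1 / γ : ℝ) ^ ((k : ℝ) - 1) := h3.symm
      _ ≤ γ ^ ((k : ℝ) - 1) * (n : ℝ) ^ (c / 2) := by
          apply mul_le_mul_of_nonneg_left _ (Real.rpow_nonneg hγ0.le _)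
          rw [← h2]; exact h1
  -- combined numeric estimate
  set D : ℝ := (1 / 2 : ℝ) * (n : ℝ) ^ ((1 : ℝ) - c) with hD
  have keyD : D + (n : ℝ) ^ (t : ℕ) * β ^ s ≤ (n : ℝ) * γ ^ (((k : ℝ) - 1) * s) := by
    have a1 : (n : ℝ) ^ (t : ℕ) * β ^ s ≤ (n : ℝ)⁻¹ := by
      calc (n : ℝ) ^ (t : ℕ) * β ^ s ≤ (n : ℝ) ^ (t : ℕ) * (n : ℝ) ^ (-((t : ℝ) + 1)) :=
            mul_le_mul_of_nonneg_left key2 (by positivity)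
        _ = (n : ℝ)⁻¹ := by
            rw [← Real.rpow_natCast (n : ℝ) t, ← Real.rpow_add hn0,
              show (t : ℝ) + -((t : ℝ) + 1) = -1 by ring, Real.rpow_neg_one]
    have hnc : (2 : ℝ) ≤ (n : ℝ) ^ ((1 : ℝ) - c) * n := by
      have e1 : (n : ℝ) ^ ((1 : ℝ) - c) * n = (n : ℝ) ^ ((2 : ℝ) - c) := by
        nth_rewrite 2 [← Real.rpow_one (n : ℝ)]
        rw [← Real.rpow_add hn0]
        congr 1
        ring
      rw [e1]
      calc (2 : ℝ) ≤ (n : ℝ) := by exact_mod_cast hn2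
        _ = (n : ℝ) ^ (1 : ℝ) := (Real.rpow_one _).symm
        _ ≤ (n : ℝ) ^ ((2 : ℝ) - c) := Real.rpow_le_rpow_of_exponent_le hn1 (by linarith)
    have a2 : (n : ℝ)⁻¹ ≤ D := by
      rw [hD, inv_eq_one_div, div_le_iff₀ hn0]
      nlinarith
    have b1 : (n : ℝ) ^ ((1 : ℝ) - c) ≤ γ ^ ((k : ℝ) - 1) * (n : ℝ) ^ (c / 2) *
        (n : ℝ) ^ ((1 : ℝ) - c) :=
      le_mul_of_one_le_left (Real.rpow_nonneg hn0.le _) key3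
    have b2 : γ ^ ((k : ℝ) - 1) * (n : ℝ) ^ (c / 2) * (n : ℝ) ^ ((1 : ℝ) - c) =
        (n : ℝ) * (γ ^ ((k : ℝ) - 1) * (n : ℝ) ^ (-(c / 2))) := by
      have e2 : (n : ℝ) ^ (c / 2) * (n : ℝ) ^ ((1 : ℝ) - c) =
          (n : ℝ) * (n : ℝ) ^ (-(c / 2)) := by
        nth_rewrite 3 [← Real.rpow_one (n : ℝ)]
        rw [← Real.rpow_add hn0, ← Real.rpow_add hn0]
        ring_nf
      rw [mul_assoc, e2]
      ring
    have b3 : (n : ℝ) * (γ ^ ((k : ℝ) - 1) * (n : ℝ) ^ (-(c / 2))) ≤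
        (n : ℝ) * γ ^ (((k : ℝ) - 1) * (s : ℝ)) :=
      mul_le_mul_of_nonneg_left key1 hn0.le
    have hDD : D + D = (n : ℝ) ^ ((1 : ℝ) - c) := by rw [hD]; ring
    linarith
  -- combinatorial setup
  set kl : Fin k := ⟨k - 1, by omega⟩ with hkl
  set ι := Fin s × Fin (k - 1) with hι
  have hcastlt : ∀ i : Fin (k - 1), (i : ℕ) < k := fun i => by omega
  set cst : Fin (k - 1) → Fin k := fun i => ⟨i, hcastlt i⟩ with hcst
  have hcstlt : ∀ i : Fin (k - 1), ((cst i : Fin k) : ℕ) < k - 1 := fun i => i.2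
  set F : ι → Finset V := fun p => Z (cst p.2) with hF
  set Ω := Fintype.piFinset F with hΩ
  set A : (ι → V) → Finset V := fun ω => (Z kl).filter fun v => ∀ p : ι, G.Adj v (ω p) with hA
  have hAsub : ∀ ω, A ω ⊆ Z kl := fun ω => Finset.filter_subset _ _
  have hcardι : Fintype.card ι = s * (k - 1) := by simp [hι]
  have hΩcard : Ω.card = n ^ (s * (k - 1)) := by
    rw [hΩ, Fintype.card_piFinset]
    rw [Finset.prod_congr rfl (fun p _ => hcard (cst p.2)), Finset.prod_const, Finset.card_univ, hcardι]
  -- counting |A ω| summed over Ω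
  have hAcount : ∀ v ∈ Z kl,
      ((Ω.filter fun ω => v ∈ A ω).card) = ∏ p : ι, (commonNbrs G {v} (Z (cst p.2))).card := by
    intro v hv
    refine card_filter_piFinset F _ (fun p => commonNbrs_subset _ _ _) _ ?_
    intro ω hω
    simp only [hA, Finset.mem_filter]
    constructor
    · rintro ⟨-, h2⟩ p
      rw [mem_commonNbrs]
      exact ⟨Fintype.mem_piFinset.mp hω p, by simpa using h2 p⟩
    · intro h
      refine ⟨hv, fun p => ?_⟩
      exact ((mem_commonNbrs _ _ _ _).mp (h p)).2 v (Finset.mem_singleton_self v)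
  have hAsum : ((n : ℝ) ^ (s * (k - 1))) * ((n : ℝ) * γ ^ (((k : ℝ) - 1) * s)) ≤
      ∑ ω ∈ Ω, ((A ω).card : ℝ) := by
    have hbridge : γ ^ (((k : ℝ) - 1) * (s : ℝ)) = γ ^ (s * (k - 1)) := by
      rw [← Real.rpow_natCast γ (s * (k - 1))]
      congr 1
      push_cast [Nat.cast_sub (by omega : 1 ≤ k)]
      ring
    have step1 : ∑ ω ∈ Ω, ((A ω).card) = ∑ v ∈ Z kl, (Ω.filter fun ω => v ∈ A ω).card := by
      have hterm : ∀ ω ∈ Ω, (A ω).card = ∑ v ∈ Z kl, if v ∈ A ω then 1 else 0 := by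
        intro ω _
        have hfe : (Z kl).filter (fun v => v ∈ A ω) = A ω := by
          rw [Finset.filter_mem_eq_inter, Finset.inter_eq_right]
          exact hAsub ω
        conv_lhs => rw [← hfe]
        exact Finset.card_filter _ _
      calc ∑ ω ∈ Ω, (A ω).card = ∑ ω ∈ Ω, ∑ v ∈ Z kl, if v ∈ A ω then 1 else 0 :=
            Finset.sum_congr rfl hterm
        _ = ∑ v ∈ Z kl, ∑ ω ∈ Ω, if v ∈ A ω then 1 else 0 := Finset.sum_comm
        _ = ∑ v ∈ Z kl, (Ω.filter fun ω => v ∈ A ω).card :=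
            Finset.sum_congr rfl fun v _ => (Finset.card_filter _ _).symm
    have step1' : ∑ ω ∈ Ω, ((A ω).card : ℝ) =
        ∑ v ∈ Z kl, ((Ω.filter fun ω => v ∈ A ω).card : ℝ) := by exact_mod_cast step1
    have hv : ∀ v ∈ Z kl, ((n : ℝ) ^ (s * (k - 1))) * γ ^ (((k : ℝ) - 1) * (s : ℝ)) ≤
        ((Ω.filter fun ω => v ∈ A ω).card : ℝ) := by
      intro v hv
      rw [hAcount v hv]
      push_cast
      calc ((n : ℝ) ^ (s * (k - 1))) * γ ^ (((k : ℝ) - 1) * (s : ℝ))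
          = (γ * (n : ℝ)) ^ (s * (k - 1)) := by rw [hbridge, mul_pow]; ring
        _ = ∏ _p : ι, (γ * (n : ℝ)) := by
            rw [Finset.prod_const, Finset.card_univ, hcardι]
        _ ≤ ∏ p : ι, ((commonNbrs G {v} (Z (cst p.2))).card : ℝ) :=
            Finset.prod_le_prod (fun _ _ => mul_nonneg hγ0.le hn0.le)
              (fun p _ => hdeg v hv (cst p.2) (hcstlt p.2))
    calc ((n : ℝ) ^ (s * (k - 1))) * ((n : ℝ) * γ ^ (((k : ℝ) - 1) * s))
        = ∑ _v ∈ Z kl, ((n : ℝ) ^ (s * (k - 1))) * γ ^ (((k : ℝ) - 1) * (s : ℝ)) := by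
          rw [Finset.sum_const, hcard kl, nsmul_eq_mul]
          ring
      _ ≤ ∑ v ∈ Z kl, ((Ω.filter fun ω => v ∈ A ω).card : ℝ) := Finset.sum_le_sum hv
      _ = ∑ ω ∈ Ω, ((A ω).card : ℝ) := step1'.symm
  -- bad sets
  set Bad : Finset (Finset V) := ((Z kl).powersetCard t).filter
      (fun T => ∃ i : Fin k, (i : ℕ) < k - 1 ∧ ((commonNbrs G T (Z i)).card : ℝ) < β * n)
      with hBad
  have hTcount : ∀ T ∈ Bad,
      ((Ω.filter fun ω => T ⊆ A ω).card) = ∏ p : ι, (commonNbrs G T (Z (cst p.2))).card := by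
    intro T hT
    have hTZ : T ⊆ Z kl := by
      have := (Finset.mem_filter.mp hT).1
      exact (Finset.mem_powersetCard.mp this).1
    refine card_filter_piFinset F _ (fun p => commonNbrs_subset _ _ _) _ ?_
    intro ω hω
    constructor
    · intro hsub p
      rw [mem_commonNbrs]
      refine ⟨Fintype.mem_piFinset.mp hω p, fun u hu => ?_⟩
      have h1 := hsub hu
      simp only [hA, Finset.mem_filter] at h1
      exact h1.2 p
    · intro h u hu
      simp only [hA, Finset.mem_filter]
      exact ⟨hTZ hu, fun p => ((mem_commonNbrs _ _ _ _).mp (h p)).2 u hu⟩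
  have hBadsum : ∑ ω ∈ Ω, ((Bad.filter fun T => T ⊆ A ω).card : ℝ) ≤
      ((n : ℝ) ^ (s * (k - 1))) * ((n : ℝ) ^ (t : ℕ) * β ^ s) := by
    have step1 : ∑ ω ∈ Ω, ((Bad.filter fun T => T ⊆ A ω).card) =
        ∑ T ∈ Bad, (Ω.filter fun ω => T ⊆ A ω).card := by
      calc ∑ ω ∈ Ω, ((Bad.filter fun T => T ⊆ A ω).card)
          = ∑ ω ∈ Ω, ∑ T ∈ Bad, if T ⊆ A ω then 1 else 0 :=
            Finset.sum_congr rfl fun ω _ => Finset.card_filter _ _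
        _ = ∑ T ∈ Bad, ∑ ω ∈ Ω, if T ⊆ A ω then 1 else 0 := Finset.sum_comm
        _ = ∑ T ∈ Bad, (Ω.filter fun ω => T ⊆ A ω).card :=
            Finset.sum_congr rfl fun T _ => (Finset.card_filter _ _).symm
    have step1' : ∑ ω ∈ Ω, ((Bad.filter fun T => T ⊆ A ω).card : ℝ) =
        ∑ T ∈ Bad, ((Ω.filter fun ω => T ⊆ A ω).card : ℝ) := by exact_mod_cast step1
    have hTb : ∀ T ∈ Bad, ((Ω.filter fun ω => T ⊆ A ω).card : ℝ) ≤
        β ^ s * (n : ℝ) ^ (s * (k - 1)) := by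
      intro T hT
      rw [hTcount T hT]
      obtain ⟨i0, hi0lt, hi0⟩ := (Finset.mem_filter.mp hT).2
      set i0' : Fin (k - 1) := ⟨i0, hi0lt⟩ with hi0'
      have hcsti0 : cst i0' = i0 := by rw [hcst]
      push_cast
      have hsplit : ∏ p : ι, ((commonNbrs G T (Z (cst p.2))).card : ℝ) =
          (∏ i : Fin (k - 1), ((commonNbrs G T (Z (cst i))).card : ℝ)) ^ s := by
        calc ∏ p : ι, ((commonNbrs G T (Z (cst p.2))).card : ℝ)
            = ∏ x : Fin s, ∏ y : Fin (k - 1), ((commonNbrs G T (Z (cst (x, y).2))).card : ℝ) :=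
              Fintype.prod_prod_type _
          _ = ∏ _x : Fin s, ∏ i : Fin (k - 1), ((commonNbrs G T (Z (cst i))).card : ℝ) := rfl
          _ = (∏ i : Fin (k - 1), ((commonNbrs G T (Z (cst i))).card : ℝ)) ^ s := by
              rw [Finset.prod_const, Finset.card_univ, Fintype.card_fin]
      have hinner : ∏ i : Fin (k - 1), ((commonNbrs G T (Z (cst i))).card : ℝ) ≤
          (β * n) * (n : ℝ) ^ (k - 2) := by
        rw [← Finset.mul_prod_erase Finset.univ _ (Finset.mem_univ i0')]
        have h1 : ((commonNbrs G T (Z (cst i0'))).card : ℝ) ≤ β * n := by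
          rw [hcsti0]; exact hi0.le
        have h2 : ∏ i ∈ Finset.univ.erase i0', ((commonNbrs G T (Z (cst i))).card : ℝ) ≤
            (n : ℝ) ^ (k - 2) := by
          calc ∏ i ∈ Finset.univ.erase i0', ((commonNbrs G T (Z (cst i))).card : ℝ)
              ≤ ∏ _i ∈ Finset.univ.erase i0', (n : ℝ) :=
                Finset.prod_le_prod (fun _ _ => Nat.cast_nonneg _)
                  (fun i _ => by
                    have hle : (commonNbrs G T (Z (cst i))).card ≤ n := by
                      rw [← hcard (cst i)]
                      exact Finset.card_le_card (commonNbrs_subset _ _ _)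
                    exact_mod_cast hle)
            _ = (n : ℝ) ^ (k - 2) := by
                rw [Finset.prod_const, Finset.card_erase_of_mem (Finset.mem_univ _),
                  Finset.card_univ, Fintype.card_fin]
                congr 1
        exact mul_le_mul h1 h2 (Finset.prod_nonneg fun _ _ => Nat.cast_nonneg _)
          (mul_nonneg hβpos.le hn0.le)
      rw [hsplit]
      calc (∏ i : Fin (k - 1), ((commonNbrs G T (Z (cst i))).card : ℝ)) ^ s
          ≤ ((β * n) * (n : ℝ) ^ (k - 2)) ^ s :=
            pow_le_pow_left₀ (Finset.prod_nonneg fun _ _ => Nat.cast_nonneg _) hinner s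
        _ = β ^ s * (n : ℝ) ^ (s * (k - 1)) := by
            have hmm : (β * (n : ℝ)) * (n : ℝ) ^ (k - 2) = β * (n : ℝ) ^ (k - 1) := by
              rw [show k - 1 = (k - 2) + 1 by omega, pow_succ]
              ring
            rw [hmm, mul_pow, ← pow_mul, Nat.mul_comm (k - 1) s]
    rw [step1']
    calc ∑ T ∈ Bad, ((Ω.filter fun ω => T ⊆ A ω).card : ℝ)
        ≤ ∑ _T ∈ Bad, β ^ s * (n : ℝ) ^ (s * (k - 1)) := Finset.sum_le_sum hTb
      _ = Bad.card * (β ^ s * (n : ℝ) ^ (s * (k - 1))) := by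
          rw [Finset.sum_const, nsmul_eq_mul]
      _ ≤ (n : ℝ) ^ (t : ℕ) * (β ^ s * (n : ℝ) ^ (s * (k - 1))) := by
          apply mul_le_mul_of_nonneg_right _
            (mul_nonneg (pow_nonneg hβpos.le s) (by positivity))
          have hBcard : Bad.card ≤ n ^ t := by
            calc Bad.card ≤ ((Z kl).powersetCard t).card :=
                  Finset.card_le_card (Finset.filter_subset _ _)
              _ = n.choose t := by rw [Finset.card_powersetCard, hcard]
              _ ≤ n ^ t := Nat.choose_le_pow n t
          exact_mod_cast hBcard
      _ = ((n : ℝ) ^ (s * (k - 1))) * ((n : ℝ) ^ (t : ℕ) * β ^ s) := by ring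
  -- averaging
  have hΩne : Ω.Nonempty := by
    rw [hΩ, Fintype.piFinset_nonempty]
    intro p
    rw [← Finset.card_pos, hcard]
    omega
  have havg : ∃ ω ∈ Ω, D + ((Bad.filter fun T => T ⊆ A ω).card : ℝ) ≤ ((A ω).card : ℝ) := by
    apply Finset.exists_le_of_sum_le hΩne
    calc ∑ ω ∈ Ω, (D + ((Bad.filter fun T => T ⊆ A ω).card : ℝ))
        = Ω.card * D + ∑ ω ∈ Ω, ((Bad.filter fun T => T ⊆ A ω).card : ℝ) := by
          rw [Finset.sum_add_distrib, Finset.sum_const, nsmul_eq_mul]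
      _ ≤ (n : ℝ) ^ (s * (k - 1)) * D + (n : ℝ) ^ (s * (k - 1)) * ((n : ℝ) ^ (t : ℕ) * β ^ s) := by
          rw [hΩcard]
          push_cast
          linarith [hBadsum]
      _ = (n : ℝ) ^ (s * (k - 1)) * (D + (n : ℝ) ^ (t : ℕ) * β ^ s) := by ring
      _ ≤ (n : ℝ) ^ (s * (k - 1)) * ((n : ℝ) * γ ^ (((k : ℝ) - 1) * s)) :=
          mul_le_mul_of_nonneg_left keyD (by positivity)
      _ ≤ ∑ ω ∈ Ω, ((A ω).card : ℝ) := hAsum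
  obtain ⟨ω, hωΩ, hω⟩ := havg
  -- build S by removing a vertex of each bad set contained in A ω
  have hVne : Nonempty V := by
    have : (Z kl).Nonempty := by rw [← Finset.card_pos, hcard]; omega
    exact ⟨this.choose⟩
  set g : Finset V → V := fun T => if h : T.Nonempty then h.choose else Classical.arbitrary V
    with hg
  set R : Finset V := (Bad.filter fun T => T ⊆ A ω).image g with hR
  refine ⟨A ω \ R, (Finset.sdiff_subset).trans (hAsub ω), ?_, ?_⟩
  · have h1 : (A ω).card ≤ (A ω \ R).card + R.card := Finset.card_le_card_sdiff_add_card
    have h2 : R.card ≤ (Bad.filter fun T => T ⊆ A ω).card := Finset.card_image_le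
    have h1' : ((A ω).card : ℝ) ≤ ((A ω \ R).card : ℝ) +
        ((Bad.filter fun T => T ⊆ A ω).card : ℝ) := by
      exact_mod_cast le_trans h1 (by omega)
    linarith [hω]
  · intro T hTS hTt i hi
    by_contra hcon
    push_neg at hcon
    have hTA : T ⊆ A ω := hTS.trans Finset.sdiff_subset
    have hTZ : T ⊆ Z kl := hTA.trans (hAsub ω)
    have hTBad : T ∈ Bad := by
      rw [hBad, Finset.mem_filter, Finset.mem_powersetCard]
      exact ⟨⟨hTZ, hTt⟩, i, hi, hcon⟩
    have hTne : T.Nonempty := by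
      rw [← Finset.card_pos, hTt]
      omega
    have hgT : g T ∈ T := by
      simp only [hg]
      rw [dif_pos hTne]
      exact hTne.choose_spec
    have hgR : g T ∈ R := by
      rw [hR]
      exact Finset.mem_image_of_mem g (Finset.mem_filter.mpr ⟨hTBad, hTA⟩)
    have hmem : g T ∈ A ω \ R := hTS hgT
    exact (Finset.mem_sdiff.mp hmem).2 hgR
end

section
/- (No heavy triangle, K₉ case.) For all γ, β > 0 there exist ε > 0, δ > 0 and n₀ such that the following holds for all n ≥ n₀. Let G be a graph on n vertices with independence number α(G) ≤ δ·√(n·log n), and let V₁, V₂, V₃ be pairwise disjoint vertex sets of equal size at least β·n such that each of the three pairs (V_i, V_j), i ≠ j, is ε-regular with edge density d(V_i, V_j) ≥ 2/3 + γ. Then G contains a clique on 9 vertices. -/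
open Finset

/-- The independence number of a graph: the largest size of an independent set of vertices. -/
noncomputable def indepNum {V : Type*} (G : SimpleGraph V) : ℕ :=
  sSup {k | ∃ s : Finset V, (∀ v ∈ s, ∀ w ∈ s, v ≠ w → ¬ G.Adj v w) ∧ s.card = k}

/-- The edge density between two finite vertex sets, as a real number. -/
noncomputable def density {V : Type*} (G : SimpleGraph V) (A B : Finset V) : ℝ :=
  by classical exact (G.edgeDensity A B : ℝ)

/-- The pair `(A, B)` is `ε`-regular: all subpairs `(A', B')` with `|A'| ≥ ε|A|`,
`|B'| ≥ ε|B|` have density within `ε` of `d(A,B)`. -/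
def IsRegularPair {V : Type*} (G : SimpleGraph V) (ε : ℝ) (A B : Finset V) : Prop :=
  ∀ A' ⊆ A, ∀ B' ⊆ B, ε * A.card ≤ A'.card → ε * B.card ≤ B'.card →
    |density G A' B' - density G A B| ≤ ε

/-!
If a set `X` of `η n` vertices spans no triangle, every neighbourhood inside `X` is independent.
So either some vertex has `d = 4 ^ s` neighbours in `X`, or all degrees in `X` are below `d` and
Shearer's averaging argument applies: for every `v ∈ X`, the weight `d [v ∈ I] + |N(v) ∩ I|` of
an independent set `I ⊆ X` averages to at least `s / 2` over all such `I` (group the `I` by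
their part away from the closed neighbourhood of `v`), while its sum over `v ∈ X` is at most
`2 d |I|`; hence some independent set has at least `s |X| / 4d` vertices. With `16 ^ s ≈ n log n`
both alternatives give an independent set of size `≳ √(n log n)`, so when `α(G)` is small every
set of `η n` vertices contains a triangle.

With densities at least `2/3 + 2ε`, regularity then builds the clique one triangle at a time.
All but `2ε|V₁|` vertices of `V₁` have a `(2/3 + ε)`-fraction of `V₂` and of `V₃` as
neighbours, and three such vertices have at least `3ε|Vⱼ|` common neighbours in each `Vⱼ`.
A triangle among them, a triangle among their common neighbours in `V₂` that are typical towards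
their common neighbours `U₃` in `V₃`, and a triangle among the common neighbours in `U₃` of the
second triangle together form a `K₉`.
-/

/-- A fibre of Shearer's grouping with `k` free neighbours has `2 ^ k + 1` independent sets and
total weight `4 ^ s + k 2 ^ (k - 1)`. -/
theorem Nat.mul_two_pow_add_one_le (s k : ℕ) :
    s * (2 ^ k + 1) ≤ 2 * (4 ^ s + k * 2 ^ (k - 1)) := by
  have hs : s < 2 ^ s := Nat.lt_two_pow_self
  have h4 : 4 ^ s = 2 ^ s * 2 ^ s := by rw [← mul_pow]; norm_num
  rcases le_or_gt k s with hks | hsk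
  · have h1 : s * 2 ^ k ≤ 2 ^ s * 2 ^ s :=
      Nat.mul_le_mul hs.le (Nat.pow_le_pow_right two_pos hks)
    have h2 : s ≤ 2 ^ s * 2 ^ s := hs.le.trans (Nat.le_mul_of_pos_right _ (by positivity))
    have h3 : 0 ≤ k * 2 ^ (k - 1) := Nat.zero_le _
    rw [h4]
    linarith
  · obtain ⟨m, rfl⟩ : ∃ m, k = m + 1 := ⟨k - 1, by omega⟩
    have h1 : s ≤ 2 ^ m := hs.le.trans (Nat.pow_le_pow_right two_pos (by omega))
    have h2 : s * 2 ^ m ≤ m * 2 ^ m := Nat.mul_le_mul_right _ (by omega)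
    have h3 : 0 ≤ 4 ^ s := Nat.zero_le _
    rw [Nat.add_sub_cancel, pow_succ]
    linarith

theorem Finset.sum_card_powerset {α : Type*} (H : Finset α) :
    ∑ T ∈ H.powerset, #T = #H * 2 ^ (#H - 1) := by
  calc ∑ T ∈ H.powerset, #T = ∑ m ∈ range (#H + 1), (#H).choose m • m :=
        sum_powerset_apply_card fun k => k
    _ = #H * 2 ^ (#H - 1) := by
        simp only [smul_eq_mul, mul_comm, Nat.sum_range_mul_choose]

theorem Nat.exists_pow_le_lt_mul {b P : ℕ} (hb : 1 < b) (hP : 1 < P) :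
    ∃ s, P ≤ b ^ s ∧ b ^ s < b * P := by
  refine ⟨Nat.clog b P, Nat.le_pow_clog hb P, ?_⟩
  have hlt := Nat.pow_pred_clog_lt_self hb hP
  obtain ⟨k, hk⟩ := Nat.exists_eq_add_one_of_ne_zero (Nat.clog_pos hb hP).ne'
  rw [hk, Nat.pred_succ] at hlt
  rw [hk, pow_succ']
  exact Nat.mul_lt_mul_of_pos_left hlt (by omega)

theorem Real.logb_two_le_two_mul_natLog {n : ℕ} (hn : 2 ≤ n) :
    Real.logb 2 n ≤ 2 * Nat.log 2 n := by
  have hL : 1 ≤ Nat.log 2 n := Nat.log_pos one_lt_two hn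
  have hlt : Real.logb 2 n < Nat.log 2 n + 1 := by
    rw [Real.logb_lt_iff_lt_rpow one_lt_two (by positivity)]
    exact_mod_cast Nat.lt_pow_succ_log_self one_lt_two n
  have : (1 : ℝ) ≤ Nat.log 2 n := by exact_mod_cast hL
  linarith

namespace SimpleGraph

section Clique

variable {V : Type*} [DecidableEq V] {G : SimpleGraph V}

theorem isNClique_union {a b : ℕ} {s t : Finset V} (hs : G.IsNClique a s)
    (ht : G.IsNClique b t) (hst : ∀ x ∈ s, ∀ y ∈ t, G.Adj x y) : G.IsNClique (a + b) (s ∪ t) := by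
  have hdisj : Disjoint s t :=
    Finset.disjoint_left.2 fun x hxs hxt => G.irrefl (hst x hxs x hxt)
  refine ⟨?_, by rw [card_union_of_disjoint hdisj, hs.card_eq, ht.card_eq]⟩
  rw [coe_union, IsClique, Set.pairwise_union]
  exact ⟨hs.isClique, ht.isClique, fun x hx y hy _ => ⟨hst x hx y hy, (hst x hx y hy).symm⟩⟩

end Clique

section IndependentSets

variable {V : Type*} [DecidableEq V] (G : SimpleGraph V) [DecidableRel G.Adj]

def indepSubsets (S : Finset V) : Finset (Finset V) := {I ∈ S.powerset | G.IsIndepSet I}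

def awayFrom (v : V) (I : Finset V) : Finset V := {u ∈ I | u ≠ v ∧ ¬G.Adj v u}

def freeNbrs (S J : Finset V) (v : V) : Finset V := {u ∈ S | G.Adj v u ∧ ∀ x ∈ J, ¬G.Adj u x}

def indepWeight (d : ℕ) (v : V) (I : Finset V) : ℕ :=
  (if v ∈ I then d else 0) + #{u ∈ I | G.Adj v u}

variable {G}

@[simp]
theorem mem_indepSubsets {S I : Finset V} : I ∈ G.indepSubsets S ↔ I ⊆ S ∧ G.IsIndepSet I := by
  simp [indepSubsets]

section Fiber

variable {S J : Finset V} {v : V}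

theorem filter_awayFrom_eq (hv : v ∈ S) (hN : G.IsIndepSet ({u ∈ S | G.Adj v u} : Finset V))
    (hJ : J ∈ G.indepSubsets (G.awayFrom v S)) :
    {I ∈ G.indepSubsets S | G.awayFrom v I = J} =
      insert (insert v J) ((G.freeNbrs S J v).powerset.image (· ∪ J)) := by
  simp only [mem_indepSubsets, subset_iff, isIndepSet_iff, Set.Pairwise, awayFrom, mem_filter,
    coe_filter, mem_coe, Set.mem_ofPred] at hJ hN
  have hsymm : ∀ a b, G.Adj a b → G.Adj b a := fun _ _ h => h.symm
  refine Finset.ext fun I => ?_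
  simp only [mem_filter, mem_indepSubsets, mem_insert, mem_image, mem_powerset, subset_iff,
    isIndepSet_iff, Set.Pairwise, mem_coe]
  simp only [awayFrom, freeNbrs]
  constructor
  · rintro ⟨⟨hIS, hI⟩, rfl⟩
    by_cases hvI : v ∈ I
    · left
      ext u
      simp only [mem_insert, mem_filter]
      grind [G.irrefl]
    · right
      refine ⟨{u ∈ I | G.Adj v u}, ?_, ?_⟩
      · simp only [mem_filter]
        grind [G.irrefl]
      · ext u
        simp only [mem_filter, mem_union]
        grind
  · rintro (rfl | ⟨T, hT, rfl⟩)
    · refine ⟨⟨?_, ?_⟩, ?_⟩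
      · simp only [mem_insert]; grind
      · simp only [mem_insert]; grind [G.irrefl]
      · ext u; simp only [mem_insert, mem_filter]; grind
    · refine ⟨⟨?_, ?_⟩, ?_⟩
      · simp only [mem_union]; grind
      · simp only [mem_union]; grind [G.irrefl]
      · ext u; simp only [mem_union, mem_filter]; grind

theorem disjoint_freeNbrs (hJ : J ⊆ G.awayFrom v S) : Disjoint J (G.freeNbrs S J v) :=
  Finset.disjoint_left.2 fun _ hxJ hxF =>
    (mem_filter.1 (hJ hxJ)).2.2 (mem_filter.1 hxF).2.1

theorem insert_notMem_image_freeNbrs (hJ : J ⊆ G.awayFrom v S) :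
    insert v J ∉ (G.freeNbrs S J v).powerset.image (· ∪ J) := by
  have hvJ : v ∉ J := fun h => (mem_filter.1 (hJ h)).2.1 rfl
  simp only [mem_image, mem_powerset, not_exists, not_and]
  intro T hT hTJ
  have hvT : v ∈ T := by
    have := mem_insert_self v J
    rw [← hTJ, mem_union] at this
    exact this.resolve_right hvJ
  exact G.irrefl (mem_filter.1 (hT hvT)).2.1

theorem injOn_union_freeNbrs (hJ : J ⊆ G.awayFrom v S) :
    Set.InjOn (· ∪ J) ((G.freeNbrs S J v).powerset : Set (Finset V)) :=
  (disjoint_injOn_union_left J).mono fun _ hT =>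
    disjoint_of_subset_right (mem_powerset.1 hT) (disjoint_freeNbrs hJ)

theorem card_filter_awayFrom_eq (hv : v ∈ S)
    (hN : G.IsIndepSet ({u ∈ S | G.Adj v u} : Finset V))
    (hJ : J ∈ G.indepSubsets (G.awayFrom v S)) :
    #{I ∈ G.indepSubsets S | G.awayFrom v I = J} = 2 ^ #(G.freeNbrs S J v) + 1 := by
  have hJS := (mem_indepSubsets.1 hJ).1
  rw [filter_awayFrom_eq hv hN hJ, card_insert_of_notMem (insert_notMem_image_freeNbrs hJS),
    card_image_of_injOn (injOn_union_freeNbrs hJS), card_powerset]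

theorem sum_indepWeight_filter_awayFrom_eq (d : ℕ) (hv : v ∈ S)
    (hN : G.IsIndepSet ({u ∈ S | G.Adj v u} : Finset V))
    (hJ : J ∈ G.indepSubsets (G.awayFrom v S)) :
    ∑ I ∈ {I ∈ G.indepSubsets S | G.awayFrom v I = J}, G.indepWeight d v I =
      d + #(G.freeNbrs S J v) * 2 ^ (#(G.freeNbrs S J v) - 1) := by
  have hJS := (mem_indepSubsets.1 hJ).1
  have hvJ : v ∉ J := fun h => (mem_filter.1 (hJS h)).2.1 rfl
  have hJv : ∀ u ∈ J, ¬G.Adj v u := fun u hu => (mem_filter.1 (hJS hu)).2.2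
  rw [filter_awayFrom_eq hv hN hJ, sum_insert (insert_notMem_image_freeNbrs hJS),
    sum_image (injOn_union_freeNbrs hJS), ← sum_card_powerset]
  congr 1
  · rw [indepWeight, if_pos (mem_insert_self v J), add_eq_left, card_eq_zero, filter_eq_empty_iff]
    rintro u hu
    rcases mem_insert.1 hu with rfl | hu
    exacts [G.irrefl, hJv u hu]
  · refine sum_congr rfl fun T hT => ?_
    have hTN : ∀ u ∈ T, G.Adj v u := fun u hu => (mem_filter.1 (mem_powerset.1 hT hu)).2.1
    have hvT : v ∉ T := fun h => G.irrefl (hTN v h)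
    rw [indepWeight, if_neg (by simp [hvT, hvJ]), zero_add]
    congr 1
    ext u
    simp only [mem_filter, mem_union]
    grind

end Fiber

variable {S : Finset V}

theorem mul_card_indepSubsets_le (s : ℕ) {v : V} (hv : v ∈ S)
    (hN : G.IsIndepSet ({u ∈ S | G.Adj v u} : Finset V)) :
    s * #(G.indepSubsets S) ≤ 2 * ∑ I ∈ G.indepSubsets S, G.indepWeight (4 ^ s) v I := by
  have hmaps : ∀ I ∈ G.indepSubsets S, G.awayFrom v I ∈ G.indepSubsets (G.awayFrom v S) := by
    intro I hI
    rw [mem_indepSubsets] at hI ⊢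
    exact ⟨filter_subset_filter _ hI.1, hI.2.mono (coe_subset.2 (filter_subset _ _))⟩
  rw [card_eq_sum_card_fiberwise hmaps, ← sum_fiberwise_of_maps_to hmaps, mul_sum, mul_sum]
  refine sum_le_sum fun J hJ => ?_
  rw [card_filter_awayFrom_eq hv hN hJ, sum_indepWeight_filter_awayFrom_eq _ hv hN hJ]
  exact Nat.mul_two_pow_add_one_le s _

theorem sum_indepWeight_le {d : ℕ} {I : Finset V} (hI : I ⊆ S)
    (hdeg : ∀ v ∈ S, #{u ∈ S | G.Adj v u} ≤ d) :
    ∑ v ∈ S, G.indepWeight d v I ≤ 2 * d * #I := by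
  have hmem : ∑ v ∈ S, (if v ∈ I then d else 0) = d * #I := by
    rw [sum_ite_mem, inter_eq_right.2 hI, sum_const, smul_eq_mul, mul_comm]
  have hnbrs : ∑ v ∈ S, #{u ∈ I | G.Adj v u} ≤ d * #I := by
    calc ∑ v ∈ S, #{u ∈ I | G.Adj v u} = ∑ u ∈ I, #{v ∈ S | G.Adj v u} :=
          sum_card_bipartiteAbove_eq_sum_card_bipartiteBelow G.Adj
      _ ≤ ∑ _u ∈ I, d := sum_le_sum fun u hu => by simpa only [G.adj_comm] using hdeg u (hI hu)
      _ = d * #I := by rw [sum_const, smul_eq_mul, mul_comm]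
  simp only [indepWeight, sum_add_distrib]
  linarith

theorem exists_isIndepSet_mul_card_le (s : ℕ)
    (hN : ∀ v ∈ S, G.IsIndepSet ({u ∈ S | G.Adj v u} : Finset V))
    (hdeg : ∀ v ∈ S, #{u ∈ S | G.Adj v u} ≤ 4 ^ s) :
    ∃ I ⊆ S, G.IsIndepSet I ∧ s * #S ≤ 4 * 4 ^ s * #I := by
  set 𝓘 := G.indepSubsets S
  have hsum : ∑ _I ∈ 𝓘, s * #S ≤ ∑ I ∈ 𝓘, 4 * 4 ^ s * #I :=
    calc ∑ _I ∈ 𝓘, s * #S = ∑ _v ∈ S, s * #𝓘 := by simp only [sum_const, smul_eq_mul]; ring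
      _ ≤ ∑ v ∈ S, 2 * ∑ I ∈ 𝓘, G.indepWeight (4 ^ s) v I :=
        sum_le_sum fun v hv => mul_card_indepSubsets_le s hv (hN v hv)
      _ = 2 * ∑ I ∈ 𝓘, ∑ v ∈ S, G.indepWeight (4 ^ s) v I := by rw [← mul_sum, sum_comm]
      _ ≤ 2 * ∑ I ∈ 𝓘, 2 * 4 ^ s * #I := by
        gcongr with I hI
        exact sum_indepWeight_le (mem_indepSubsets.1 hI).1 hdeg
      _ = ∑ I ∈ 𝓘, 4 * 4 ^ s * #I := by rw [mul_sum]; ring_nf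
  obtain ⟨I, hI, hle⟩ := exists_le_of_sum_le ⟨∅, by simp [𝓘]⟩ hsum
  exact ⟨I, (mem_indepSubsets.1 hI).1, (mem_indepSubsets.1 hI).2, hle⟩

theorem exists_isIndepSet_of_forall_not_isNClique_three (hS : ∀ t ⊆ S, ¬G.IsNClique 3 t)
    (s : ℕ) :
    ∃ I ⊆ S, G.IsIndepSet I ∧ (4 ^ s ≤ #I ∨ s * #S ≤ 4 * 4 ^ s * #I) := by
  have hN : ∀ v ∈ S, G.IsIndepSet ({u ∈ S | G.Adj v u} : Finset V) := by
    intro v hv a ha b hb _ hab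
    simp only [coe_filter, Set.mem_ofPred] at ha hb
    refine hS {v, a, b} ?_ (is3Clique_triple_iff.2 ⟨ha.2, hb.2, hab⟩)
    simp [insert_subset_iff, hv, ha.1, hb.1]
  by_cases hbig : ∃ v ∈ S, 4 ^ s ≤ #{u ∈ S | G.Adj v u}
  · obtain ⟨v, hv, hdeg⟩ := hbig
    exact ⟨_, filter_subset _ _, hN v hv, Or.inl hdeg⟩
  · push Not at hbig
    obtain ⟨I, hIS, hI, hle⟩ := exists_isIndepSet_mul_card_le s hN fun v hv => (hbig v hv).le
    exact ⟨I, hIS, hI, Or.inr hle⟩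

theorem exists_isIndepSet_sqrt_le (hS : ∀ t ⊆ S, ¬G.IsNClique 3 t) {η : ℝ} (hη : 0 ≤ η)
    {n : ℕ} (hn : 2 ≤ n) (hSη : η * n ≤ #S) :
    ∃ I ⊆ S, G.IsIndepSet I ∧ min 1 (η / 64) * √(n * Nat.log 2 n) ≤ #I := by
  set L := Nat.log 2 n
  have hL : 1 ≤ L := Nat.log_pos one_lt_two hn
  have hP : 1 < n * L := by nlinarith
  obtain ⟨s, hPs, hsP⟩ := Nat.exists_pow_le_lt_mul (b := 16) (by norm_num) hP
  have hLs : L ≤ 4 * s := by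
    have : 2 ^ L ≤ 2 ^ (4 * s) :=
      calc 2 ^ L ≤ n := Nat.pow_log_le_self 2 (by omega)
        _ ≤ n * L := Nat.le_mul_of_pos_right n hL
        _ ≤ 16 ^ s := hPs
        _ = 2 ^ (4 * s) := by rw [pow_mul]; norm_num
    exact (Nat.pow_le_pow_iff_right (by norm_num)).1 this
  set x := √((n : ℝ) * L)
  have hx : 0 < x := Real.sqrt_pos.2 (by exact_mod_cast (by omega : 0 < n * L))
  have hxx : x * x = n * L := Real.mul_self_sqrt (by positivity)
  have h16 : ((4 : ℝ) ^ s) ^ 2 = 16 ^ s := by rw [← pow_mul, mul_comm, pow_mul]; norm_num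
  have hPs' : (n : ℝ) * L ≤ 16 ^ s := by exact_mod_cast hPs
  have hsP' : (16 : ℝ) ^ s ≤ 16 * (n * L) := by exact_mod_cast hsP.le
  have hxd : x ≤ 4 ^ s := Real.sqrt_le_iff.2 ⟨by positivity, h16 ▸ hPs'⟩
  have hdx : (4 : ℝ) ^ s ≤ 4 * x := by nlinarith
  obtain ⟨I, hIS, hI, hbig | hsum⟩ := G.exists_isIndepSet_of_forall_not_isNClique_three hS s
  · refine ⟨I, hIS, hI, ?_⟩
    have : ((4 ^ s : ℕ) : ℝ) ≤ #I := by exact_mod_cast hbig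
    push_cast at this
    calc min 1 (η / 64) * √(n * L) ≤ 1 * x := by
          gcongr
          exact min_le_left _ _
      _ ≤ #I := by linarith
  · refine ⟨I, hIS, hI, ?_⟩
    have hsum' : (s : ℝ) * #S ≤ 4 * 4 ^ s * #I := by exact_mod_cast hsum
    have hLs' : (L : ℝ) ≤ 4 * s := by exact_mod_cast hLs
    have : η * (x * x) ≤ 64 * x * #I :=
      calc η * (x * x) = L * (η * n) := by rw [hxx]; ring
        _ ≤ (4 * s) * #S := by gcongr
        _ ≤ 4 * (4 ^ s) * (4 * #I) := by linarith
        _ ≤ 4 * (4 * x) * (4 * #I) := by gcongr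
        _ = 64 * x * #I := by ring
    calc min 1 (η / 64) * √(n * L) ≤ η / 64 * x := by
          gcongr
          exact min_le_right _ _
      _ ≤ #I := by nlinarith

end IndependentSets

section Regularity

variable {V : Type*} {G : SimpleGraph V} [DecidableRel G.Adj]

theorem density_eq_edgeDensity (A B : Finset V) : density G A B = G.edgeDensity A B := by
  unfold density
  congr!

theorem density_le_one (A B : Finset V) : density G A B ≤ 1 := by
  rw [density_eq_edgeDensity]
  exact_mod_cast G.edgeDensity_le_one A B

theorem density_mul_card_mul_card (A B : Finset V) :
    density G A B * (#A * #B) = ∑ x ∈ A, (#{y ∈ B | G.Adj x y} : ℝ) := by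
  have hcard : #(G.interedges A B) = ∑ x ∈ A, #{y ∈ B | G.Adj x y} := by
    simp only [interedges, Rel.interedges, card_filter, sum_product]
  rcases eq_or_ne ((#A : ℝ) * #B) 0 with h | h
  · rcases mul_eq_zero.1 h with h | h <;> simp_all
  · rw [density_eq_edgeDensity, edgeDensity_def, ← Nat.cast_sum, ← hcard]
    push_cast
    exact div_mul_cancel₀ _ h

variable (G) in
noncomputable def heavyIn (θ : ℝ) (C X : Finset V) : Finset V :=
  {x ∈ X | θ * #C ≤ #{u ∈ C | G.Adj x u}}

variable (G) in
def commonNbrs (t C : Finset V) : Finset V := {u ∈ C | ∀ x ∈ t, G.Adj x u}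

theorem card_sub_le_card_heavyIn {ε : ℝ} (hε : 0 ≤ ε) {A B D X : Finset V}
    (hreg : IsRegularPair G ε A B) (hDB : D ⊆ B) (hD : ε * #B ≤ #D) (hXA : X ⊆ A) :
    #X - ε * #A ≤ #(G.heavyIn (density G A B - ε) D X) := by
  set θ := density G A B - ε
  set bad := {x ∈ A | ¬θ * #D ≤ #{y ∈ D | G.Adj x y}}
  have hbad : (#bad : ℝ) ≤ ε * #A := by
    by_contra! hlt
    have hne : bad.Nonempty :=
      card_pos.1 (by exact_mod_cast (by positivity : 0 ≤ ε * #A).trans_lt hlt)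
    have hdens : θ ≤ density G bad D := by
      linarith [(abs_le.1 (hreg bad (filter_subset _ _) D hDB hlt.le hD)).1]
    have hsum : ∑ x ∈ bad, (#{y ∈ D | G.Adj x y} : ℝ) < ∑ _x ∈ bad, θ * #D :=
      sum_lt_sum_of_nonempty hne fun x hx => not_le.1 (mem_filter.1 hx).2
    rw [← density_mul_card_mul_card, sum_const, nsmul_eq_mul] at hsum
    nlinarith [mul_le_mul_of_nonneg_right hdens (by positivity : (0 : ℝ) ≤ #bad * #D)]
  have hsplit := card_filter_add_card_filter_not (s := X) fun x => θ * #D ≤ #{y ∈ D | G.Adj x y}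
  have hsub : (#{x ∈ X | ¬θ * #D ≤ #{y ∈ D | G.Adj x y}} : ℝ) ≤ #bad := by
    exact_mod_cast card_le_card (filter_subset_filter _ hXA)
  have hsplit' := congrArg (Nat.cast : ℕ → ℝ) hsplit
  push_cast at hsplit'
  rw [heavyIn]
  linarith

theorem one_sub_card_mul_le_card_commonNbrs [DecidableEq V] {θ : ℝ} {t C X : Finset V}
    (ht : t ⊆ G.heavyIn θ C X) : (1 - #t * (1 - θ)) * #C ≤ #(G.commonNbrs t C) := by
  have hcover : C ⊆ G.commonNbrs t C ∪ t.biUnion fun x => {u ∈ C | ¬G.Adj x u} := by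
    intro u hu
    by_cases h : ∀ x ∈ t, G.Adj x u
    · exact mem_union_left _ (mem_filter.2 ⟨hu, h⟩)
    · push Not at h
      obtain ⟨x, hx, hxu⟩ := h
      exact mem_union_right _ (mem_biUnion.2 ⟨x, hx, mem_filter.2 ⟨hu, hxu⟩⟩)
  have hcard : (#C : ℝ) ≤ #(G.commonNbrs t C) + ∑ x ∈ t, (#{u ∈ C | ¬G.Adj x u} : ℝ) := by
    exact_mod_cast (card_le_card hcover).trans
      ((card_union_le _ _).trans (add_le_add_right card_biUnion_le _))
  have hnon : ∑ x ∈ t, (#{u ∈ C | ¬G.Adj x u} : ℝ) ≤ #t * ((1 - θ) * #C) := by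
    rw [← nsmul_eq_mul]
    refine sum_le_card_nsmul _ _ _ fun x hx => ?_
    have hθ := (mem_filter.1 (ht hx)).2
    have hsplit :=
      congrArg (Nat.cast : ℕ → ℝ) (card_filter_add_card_filter_not (s := C) (G.Adj x))
    push_cast at hsplit
    linarith
  linarith

theorem three_mul_le_card_commonNbrs [DecidableEq V] {ε d : ℝ} {t C X : Finset V} (ht : #t = 3)
    (hd : 2 / 3 + 2 * ε ≤ d) (htX : t ⊆ G.heavyIn (d - ε) C X) :
    3 * ε * #C ≤ #(G.commonNbrs t C) := by
  have := one_sub_card_mul_le_card_commonNbrs htX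
  rw [ht, Nat.cast_ofNat] at this
  nlinarith [mul_le_mul_of_nonneg_right hd (#C).cast_nonneg (α := ℝ)]

theorem not_cliqueFree_nine_of_isRegularPair [DecidableEq V] {ε τ : ℝ} (hε : 0 ≤ ε)
    (htri : ∀ X : Finset V, τ ≤ #X → ∃ t ⊆ X, G.IsNClique 3 t) {V₁ V₂ V₃ : Finset V}
    (hV₁ : τ ≤ ε ^ 2 * #V₁) (hV₂ : τ ≤ ε ^ 2 * #V₂) (hV₃ : τ ≤ ε ^ 2 * #V₃)
    (h₁₂ : IsRegularPair G ε V₁ V₂) (h₁₃ : IsRegularPair G ε V₁ V₃)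
    (h₂₃ : IsRegularPair G ε V₂ V₃)
    (d₁₂ : 2 / 3 + 2 * ε ≤ density G V₁ V₂) (d₁₃ : 2 / 3 + 2 * ε ≤ density G V₁ V₃)
    (d₂₃ : 2 / 3 + 2 * ε ≤ density G V₂ V₃) : ¬G.CliqueFree 9 := by
  have hε₁ : ε ≤ 1 / 6 := by linarith [density_le_one (G := G) V₁ V₂]
  have hsmall : ∀ A : Finset V, ε * #A ≤ #A := fun A => by nlinarith [(#A).cast_nonneg (α := ℝ)]
  set X₁ := G.heavyIn (density G V₁ V₃ - ε) V₃ (G.heavyIn (density G V₁ V₂ - ε) V₂ V₁)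
  have hX₁ : #V₁ - 2 * ε * #V₁ ≤ (#X₁ : ℝ) := by
    have h₂ := card_sub_le_card_heavyIn hε h₁₂ subset_rfl (hsmall V₂) subset_rfl
    have h₃ := card_sub_le_card_heavyIn hε h₁₃ subset_rfl (hsmall V₃)
      (X := G.heavyIn (density G V₁ V₂ - ε) V₂ V₁) (filter_subset _ _)
    linarith
  obtain ⟨t₁, ht₁X, ht₁⟩ := htri X₁ (by nlinarith [(#V₁).cast_nonneg (α := ℝ)])
  set U₃ := G.commonNbrs t₁ V₃
  have hU₂ := three_mul_le_card_commonNbrs ht₁.card_eq d₁₂ (ht₁X.trans (filter_subset _ _))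
  have hU₃ : 3 * ε * #V₃ ≤ (#U₃ : ℝ) := three_mul_le_card_commonNbrs ht₁.card_eq d₁₃ ht₁X
  set X₂ := G.heavyIn (density G V₂ V₃ - ε) U₃ (G.commonNbrs t₁ V₂)
  have hX₂ : #(G.commonNbrs t₁ V₂) - ε * #V₂ ≤ (#X₂ : ℝ) :=
    card_sub_le_card_heavyIn hε h₂₃ (filter_subset _ _) (by nlinarith) (filter_subset _ _)
  obtain ⟨t₂, ht₂X, ht₂⟩ := htri X₂ (by nlinarith [(#V₂).cast_nonneg (α := ℝ)])
  have hW := three_mul_le_card_commonNbrs ht₂.card_eq d₂₃ ht₂X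
  obtain ⟨t₃, ht₃W, ht₃⟩ :=
    htri (G.commonNbrs t₂ U₃) (by nlinarith [(#V₃).cast_nonneg (α := ℝ)])
  refine (isNClique_union (isNClique_union ht₁ ht₂ ?_) ht₃ ?_).not_cliqueFree
  · exact fun x hx y hy => (mem_filter.1 (mem_filter.1 (ht₂X hy)).1).2 x hx
  · intro x hx z hz
    obtain ⟨hzU₃, hzt₂⟩ := mem_filter.1 (ht₃W hz)
    rcases mem_union.1 hx with hx | hx
    exacts [(mem_filter.1 hzU₃).2 x hx, hzt₂ x hx]

end Regularity

end SimpleGraph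

theorem card_le_indepNum {V : Type*} [Finite V] (G : SimpleGraph V) {s : Finset V}
    (hs : G.IsIndepSet s) : #s ≤ indepNum G := by
  have : indepNum G = G.indepNum := by
    simp only [indepNum, SimpleGraph.indepNum, SimpleGraph.isNIndepSet_iff,
      SimpleGraph.isIndepSet_iff, Set.Pairwise, mem_coe]
  exact this ▸ hs.card_le_indepNum

theorem exists_isNClique_three_of_indepNum_le {V : Type*} [Finite V] [DecidableEq V]
    {G : SimpleGraph V} [DecidableRel G.Adj] {η : ℝ} (hη : 0 < η) {n : ℕ} (hn : 2 ≤ n)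
    (hα : indepNum G ≤ min 1 (η / 64) / 2 * √(n * Real.logb 2 n)) {S : Finset V}
    (hS : η * n ≤ #S) : ∃ t ⊆ S, G.IsNClique 3 t := by
  by_contra! hS3
  obtain ⟨I, -, hI, hIc⟩ := G.exists_isIndepSet_sqrt_le hS3 hη.le hn hS
  set c := min 1 (η / 64)
  have hc : 0 < c := by positivity
  have hP : 0 < √((n : ℝ) * Nat.log 2 n) :=
    Real.sqrt_pos.2 (by have := Nat.log_pos one_lt_two hn; positivity)
  have hlog : √(n * Real.logb 2 n) ≤ √2 * √((n : ℝ) * Nat.log 2 n) := by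
    rw [← Real.sqrt_mul zero_le_two]
    exact Real.sqrt_le_sqrt (by nlinarith [Real.logb_two_le_two_mul_natLog hn])
  have hsqrt2 : √2 < 2 := by rw [Real.sqrt_lt' two_pos]; norm_num
  have : (#I : ℝ) < #I :=
    calc (#I : ℝ) ≤ indepNum G := by exact_mod_cast card_le_indepNum G hI
      _ ≤ c / 2 * (√2 * √((n : ℝ) * Nat.log 2 n)) := hα.trans (by gcongr)
      _ < c * √((n : ℝ) * Nat.log 2 n) := by
        nlinarith [mul_pos (mul_pos hc hP) (sub_pos.2 hsqrt2)]
      _ ≤ #I := hIc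
  exact lt_irrefl _ this

theorem no_heavy_triangle_K9 (γ β : ℝ) (hγ : 0 < γ) (hβ : 0 < β) :
    ∃ ε : ℝ, 0 < ε ∧ ∃ δ : ℝ, 0 < δ ∧ ∃ n₀ : ℕ, ∀ n : ℕ, n₀ ≤ n →
      ∀ G : SimpleGraph (Fin n),
        (indepNum G : ℝ) ≤ δ * Real.sqrt (n * Real.logb 2 n) →
        ∀ V₁ V₂ V₃ : Finset (Fin n),
          Disjoint V₁ V₂ → Disjoint V₁ V₃ → Disjoint V₂ V₃ →
          V₁.card = V₂.card → V₂.card = V₃.card →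
          β * n ≤ (V₁.card : ℝ) →
          IsRegularPair G ε V₁ V₂ → IsRegularPair G ε V₁ V₃ → IsRegularPair G ε V₂ V₃ →
          2 / 3 + γ ≤ density G V₁ V₂ → 2 / 3 + γ ≤ density G V₁ V₃ →
          2 / 3 + γ ≤ density G V₂ V₃ →
          ¬ G.CliqueFree 9 := by
  classical
  set ε := γ / 2 with hε
  have hη : 0 < ε ^ 2 * β := by positivity
  refine ⟨ε, by positivity, min 1 (ε ^ 2 * β / 64) / 2, by positivity, 2, ?_⟩
  intro n hn G hα V₁ V₂ V₃ _ _ _ h₁₂ h₂₃ hV₁ r₁₂ r₁₃ r₂₃ d₁₂ d₁₃ d₂₃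
  have hV : ε ^ 2 * β * n ≤ ε ^ 2 * #V₁ := by rw [mul_assoc]; gcongr
  refine SimpleGraph.not_cliqueFree_nine_of_isRegularPair (τ := ε ^ 2 * β * n) (by positivity)
    (fun X hX => exists_isNClique_three_of_indepNum_le hη hn hα hX) hV (by rwa [← h₁₂])
    (by rwa [← h₂₃, ← h₁₂]) r₁₂ r₁₃ r₂₃ (by linarith) (by linarith) (by linarith)
end

section
/- (Standard clique edge-weighting bound.) Let G be a graph on n vertices and let w be the standard clique edge-weighting of G. Then the total weight satisfies w(G) := Σ_{e ∈ E(G)} w(e) ≤ n²/4. -/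
open Finset

/-- The edge set of a graph on a finite vertex type, as a `Finset`. -/
noncomputable def edgeFinset' {V : Type*} [Fintype V] (G : SimpleGraph V) : Finset (Sym2 V) :=
  by classical exact G.edgeFinset

/-- The order of a largest clique of `G` containing (both endpoints of) the edge `e`. -/
noncomputable def edgeCliqueNum {V : Type*} (G : SimpleGraph V) (e : Sym2 V) : ℕ :=
  sSup {r | ∃ s : Finset V, G.IsNClique r s ∧ ∀ v ∈ e, v ∈ s}

/-!
Give each ordered pair `(u, v)` the weight `f u v` of the edge `uv`, or `0` if `uv` is not an
edge, so that `∑ u, ∑ v, f u v = 2 w(G)`. All that matters is that a pair inside an `r`-clique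
weighs at most `r / (2(r - 1))`, which decreases in `r`. For a vertex set `A` of size `n`, bound
`∑ u ∈ A, ∑ v ∈ A, f u v` by `n² / 2` by strong induction: let `K` be a largest clique of `G[A]`,
of order `k`. A vertex `u` with `s` neighbours in `K` spans with them a clique of order
`s + 1 ≤ k`, so `∑ v ∈ K, f u v ≤ s (s + 1) / (2s) ≤ k / 2`. The pairs meeting `K` thus
contribute at most `(2n - k) k / 2`, and by induction the others at most `(n - k)² / 2`,
for a total of `n² / 2`.
-/

noncomputable def cliqueWeight (r : ℕ) : ℝ := r / (2 * (r - 1))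

lemma antitoneOn_cliqueWeight : AntitoneOn cliqueWeight (Set.Ici 2) := by
  intro a (ha : 2 ≤ a) b _ hab
  have ha' : (2 : ℝ) ≤ a := by exact_mod_cast ha
  have hab' : (a : ℝ) ≤ b := by exact_mod_cast hab
  unfold cliqueWeight
  rw [div_le_div_iff₀ (by linarith) (by linarith)]
  nlinarith

lemma natCast_mul_cliqueWeight_succ_le (s : ℕ) : s * cliqueWeight (s + 1) ≤ (s + 1) / 2 := by
  rcases eq_or_ne s 0 with rfl | hs
  · norm_num
  · have hs' : (s : ℝ) ≠ 0 := by exact_mod_cast hs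
    unfold cliqueWeight
    push_cast
    rw [add_sub_cancel_right, mul_div_assoc', mul_comm 2, mul_div_mul_left _ _ hs']

namespace SimpleGraph

variable {V : Type*} {G : SimpleGraph V}

structure IsCliqueWeightBounded (G : SimpleGraph V) (f : V → V → ℝ) : Prop where
  le_zero_of_not_adj {u v : V} : ¬ G.Adj u v → f u v ≤ 0
  le_cliqueWeight {r : ℕ} {s : Finset V} {u v : V} :
    G.IsNClique r s → u ∈ s → v ∈ s → G.Adj u v → f u v ≤ cliqueWeight r

lemma IsCliqueWeightBounded.flip {f : V → V → ℝ} (hf : G.IsCliqueWeightBounded f) :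
    G.IsCliqueWeightBounded (flip f) where
  le_zero_of_not_adj h := hf.le_zero_of_not_adj fun h' => h h'.symm
  le_cliqueWeight hs hu hv h := hf.le_cliqueWeight hs hv hu h.symm

lemma exists_isClique_card_max (G : SimpleGraph V) {A : Finset V} (hA : A.Nonempty) :
    ∃ K ⊆ A, K.Nonempty ∧ G.IsClique (K : Set V) ∧
      ∀ s ⊆ A, G.IsClique (s : Set V) → #s ≤ #K := by
  classical
  obtain ⟨a, ha⟩ := hA
  have hcliques : {a} ∈ A.powerset.filter fun s : Finset V => G.IsClique (s : Set V) := by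
    simp [ha]
  obtain ⟨K, hK, hmax⟩ := exists_max_image _ card ⟨_, hcliques⟩
  simp only [mem_filter, mem_powerset] at hK hmax
  refine ⟨K, hK.1, card_pos.mp ?_, hK.2, fun s hsA hs => hmax s ⟨hsA, hs⟩⟩
  simpa using hmax {a} (by simp [ha])

variable {f : V → V → ℝ}

lemma IsCliqueWeightBounded.sum_le_of_isClique_card_max (hf : G.IsCliqueWeightBounded f)
    {A K : Finset V} (hKA : K ⊆ A) (hK : G.IsClique (K : Set V))
    (hmax : ∀ s ⊆ A, G.IsClique (s : Set V) → #s ≤ #K) {u : V} (hu : u ∈ A) :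
    ∑ v ∈ K, f u v ≤ #K / 2 := by
  classical
  set S := K.filter (G.Adj u)
  have huS : u ∉ S := fun h => G.irrefl (mem_filter.mp h).2
  have hclique : G.IsNClique (#S + 1) (insert u S) := by
    refine ⟨?_, card_insert_of_notMem huS⟩
    rw [coe_insert, isClique_insert]
    exact ⟨hK.subset (filter_subset _ _), fun v hv _ => (mem_filter.mp hv).2⟩
  have hSK : #S + 1 ≤ #K := by
    simpa [card_insert_of_notMem huS] using
      hmax _ (insert_subset hu ((filter_subset _ _).trans hKA)) hclique.isClique
  calc ∑ v ∈ K, f u v ≤ ∑ v ∈ S, f u v := by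
        rw [sum_filter]
        refine sum_le_sum fun v _ => ?_
        split_ifs with h
        exacts [le_rfl, hf.le_zero_of_not_adj h]
    _ ≤ #S * cliqueWeight (#S + 1) := by
        rw [← nsmul_eq_mul]
        refine sum_le_card_nsmul _ _ _ fun v hv => ?_
        exact hf.le_cliqueWeight hclique (mem_insert_self u S) (mem_insert_of_mem hv)
          (mem_filter.mp hv).2
    _ ≤ (#S + 1) / 2 := natCast_mul_cliqueWeight_succ_le _
    _ ≤ #K / 2 := by gcongr; exact_mod_cast hSK

theorem IsCliqueWeightBounded.sum_sum_le (hf : G.IsCliqueWeightBounded f) (A : Finset V) :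
    ∑ u ∈ A, ∑ v ∈ A, f u v ≤ (#A : ℝ) ^ 2 / 2 := by
  classical
  induction A using Finset.strongInduction with
  | H A ih =>
  rcases A.eq_empty_or_nonempty with rfl | hA
  · simp
  obtain ⟨K, hKA, hKne, hK, hmax⟩ := G.exists_isClique_card_max hA
  set D := A \ K
  have hcard : (#D : ℝ) + #K = #A := by exact_mod_cast card_sdiff_add_card_eq_card hKA
  have hK_rows : ∑ u ∈ K, ∑ v ∈ A, f u v ≤ #A * (#K / 2) := by
    rw [sum_comm, ← nsmul_eq_mul]
    exact sum_le_card_nsmul _ _ _ fun v hv =>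
      hf.flip.sum_le_of_isClique_card_max hKA hK hmax hv
  have hD_K : ∑ u ∈ D, ∑ v ∈ K, f u v ≤ #D * (#K / 2) := by
    rw [← nsmul_eq_mul]
    exact sum_le_card_nsmul _ _ _ fun u hu =>
      hf.sum_le_of_isClique_card_max hKA hK hmax (sdiff_subset hu)
  have hD_D := ih D (sdiff_ssubset hKA hKne)
  have hsplit : ∑ u ∈ A, ∑ v ∈ A, f u v =
      ∑ u ∈ K, ∑ v ∈ A, f u v + (∑ u ∈ D, ∑ v ∈ K, f u v + ∑ u ∈ D, ∑ v ∈ D, f u v) := by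
    rw [← sum_sdiff hKA, add_comm]
    congr 1
    rw [← sum_add_distrib]
    exact sum_congr rfl fun u _ => (sum_sdiff hKA).symm.trans (add_comm _ _)
  have htotal : (#A : ℝ) ^ 2 / 2 = #A * (#K / 2) + (#D * (#K / 2) + #D ^ 2 / 2) := by
    rw [← hcard]
    ring
  rw [hsplit, htotal]
  gcongr

lemma sum_sum_ite_adj_eq_two_nsmul_sum_edgeFinset [Fintype V] [DecidableRel G.Adj]
    [Fintype G.edgeSet] {M : Type*} [AddCommMonoid M] (g : Sym2 V → M) :
    ∑ u, ∑ v, (if G.Adj u v then g s(u, v) else 0) = 2 • ∑ e ∈ G.edgeFinset, g e := by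
  classical
  calc ∑ u, ∑ v, (if G.Adj u v then g s(u, v) else 0)
      = ∑ p ∈ univ.filter (fun p : V × V => G.Adj p.1 p.2), g s(p.1, p.2) := by
        rw [sum_filter, ← Fintype.sum_prod_type']
    _ = ∑ d : G.Dart, g d.edge := by
        refine sum_bij' (fun p hp => ⟨p, (mem_filter.1 hp).2⟩) (fun d _ => d.toProd)
          ?_ ?_ ?_ ?_ ?_ <;> simp
    _ = ∑ e ∈ G.edgeFinset, ∑ d : G.Dart with d.edge = e, g d.edge :=
        (sum_fiberwise_of_maps_to (fun d _ => by simp) _).symm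
    _ = ∑ e ∈ G.edgeFinset, 2 • g e := sum_congr rfl fun e he => by
        rw [sum_congr rfl fun d hd => congrArg g (mem_filter.1 hd).2, sum_const,
          G.dart_edge_fiber_card e (mem_edgeFinset.1 he)]
    _ = 2 • ∑ e ∈ G.edgeFinset, g e := (smul_sum ..).symm

end SimpleGraph

section

variable {V : Type*} [Fintype V] {G : SimpleGraph V}

lemma le_edgeCliqueNum {r : ℕ} {s : Finset V} {e : Sym2 V} (hs : G.IsNClique r s)
    (he : ∀ v ∈ e, v ∈ s) : r ≤ edgeCliqueNum G e :=
  le_csSup ⟨Fintype.card V, fun _ ⟨t, ht, _⟩ => ht.card_eq ▸ t.card_le_univ⟩ ⟨s, hs, he⟩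

lemma isCliqueWeightBounded_edgeCliqueNum [DecidableRel G.Adj] :
    G.IsCliqueWeightBounded fun u v =>
      if G.Adj u v then cliqueWeight (edgeCliqueNum G s(u, v)) else 0 where
  le_zero_of_not_adj h := (if_neg h).le
  le_cliqueWeight {r s u v} hs hu hv h := by
    rw [if_pos h]
    have hr : 2 ≤ r := hs.card_eq ▸ one_lt_card.mpr ⟨u, hu, v, hv, h.ne⟩
    have hle : r ≤ edgeCliqueNum G s(u, v) := le_edgeCliqueNum hs (by simp [hu, hv])
    exact antitoneOn_cliqueWeight hr (hr.trans hle) hle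

end

theorem standard_clique_edge_weighting_bound {V : Type*} [Fintype V]
    (G : SimpleGraph V) (n : ℕ) (hn : Fintype.card V = n) :
    ∑ e ∈ edgeFinset' G,
        (edgeCliqueNum G e : ℝ) / (2 * ((edgeCliqueNum G e : ℝ) - 1)) ≤
      (n : ℝ) ^ 2 / 4 := by
  classical
  have hE : edgeFinset' G = G.edgeFinset := by ext; simp [edgeFinset']
  have h := isCliqueWeightBounded_edgeCliqueNum.sum_sum_le (G := G) univ
  rw [G.sum_sum_ite_adj_eq_two_nsmul_sum_edgeFinset (cliqueWeight <| edgeCliqueNum G ·),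
    card_univ, hn, nsmul_eq_mul] at h
  rw [hE]
  change ∑ e ∈ G.edgeFinset, cliqueWeight (edgeCliqueNum G e) ≤ _
  linarith
end

section
/- (Weighted Turán bound for K₄-free graphs without 2/3-heavy triangles.) For every ε > 0 there exists n₀ such that the following holds for all n ≥ n₀. Let G be a K₄-free graph on n vertices with a weight function w : E(G) → [0,1], and suppose that G contains no triangle all three of whose edges have weight strictly greater than 2/3. Then Σ_{e ∈ E(G)} w(e) ≤ (3/10 + ε)·n². -/
open Finset

/-!
Let `H` be the graph of the edges of weight `> 2/3`. Bounding the weight of an edge of `H` by `1`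
and of any other edge by `2/3`, the total weight is at most `(2 e(G) + e(H)) / 3`, where `H ≤ G`
is triangle-free. Zykov symmetrisation, applied to `G` and `H` simultaneously, does not decrease
`2 e(G) + e(H)`: cloning a vertex `s` onto a non-neighbour `t` changes it by the difference of the
quantities `2 d_G + d_H` at `s` and `t`. So we may assume that `G` is complete multipartite, hence
`3`-partite since it is `K₄`-free. With parts of sizes `a, b ≤ c`, `G` has at most `ab + bc + ca`
edges and the triangle-free `H` at most `(a + b) c`, and
`20 (ab + bc + ca) + 10 (a + b) c ≤ 9 (a + b + c)²`.
-/

namespace SimpleGraph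

section Interedges

variable {V : Type*} (G : SimpleGraph V) [DecidableRel G.Adj]

theorem card_interedges_eq_sum (s t : Finset V) :
    #(G.interedges s t) = ∑ x ∈ s, #{y ∈ t | G.Adj x y} := by
  simp only [interedges_def, card_filter, sum_product]

theorem card_interedges_add_sum_card_not_adj (s t : Finset V) :
    #(G.interedges s t) + ∑ x ∈ s, #{y ∈ t | ¬G.Adj x y} = #s * #t := by
  rw [card_interedges_eq_sum, ← sum_add_distrib]
  simp only [card_filter_add_card_filter_not, sum_const, smul_eq_mul]

theorem card_interedges_comm (s t : Finset V) : #(G.interedges s t) = #(G.interedges t s) :=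
  @Rel.card_interedges_comm _ G.Adj _ G.symm s t

theorem interedges_eq_empty_of_isIndepSet {s : Finset V} (hs : G.IsIndepSet s) :
    G.interedges s s = ∅ :=
  eq_empty_of_forall_notMem fun _ hxy =>
    have hxy := (G.mem_interedges_iff.mp hxy)
    hs hxy.1 hxy.2.1 hxy.2.2.ne hxy.2.2

theorem card_interedges_univ [Fintype V] : #(G.interedges univ univ) = 2 * #G.edgeFinset := by
  rw [card_interedges_eq_sum, ← sum_degrees_eq_twice_card_edges]
  simp only [degree, neighborFinset_eq_filter]

variable [DecidableEq V]

theorem card_interedges_union_left {s s' : Finset V} (h : Disjoint s s') (t : Finset V) :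
    #(G.interedges (s ∪ s') t) = #(G.interedges s t) + #(G.interedges s' t) := by
  rw [← card_union_of_disjoint (G.interedges_disjoint_left h t)]
  simp only [interedges_def, union_product, filter_union]

theorem card_interedges_union_right (s : Finset V) {t t' : Finset V} (h : Disjoint t t') :
    #(G.interedges s (t ∪ t')) = #(G.interedges s t) + #(G.interedges s t') := by
  rw [← card_union_of_disjoint (G.interedges_disjoint_right s h)]
  simp only [interedges_def, product_union, filter_union]

theorem card_edgeFinset_eq_of_isIndepSet [Fintype V] {A B C : Finset V}
    (hcover : ∀ x, x ∈ A ∨ x ∈ B ∨ x ∈ C)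
    (hAB : Disjoint A B) (hAC : Disjoint A C) (hBC : Disjoint B C)
    (hA : G.IsIndepSet A) (hB : G.IsIndepSet B) (hC : G.IsIndepSet C) :
    #G.edgeFinset = #(G.interedges A B) + #(G.interedges A C) + #(G.interedges B C) := by
  have huniv : A ∪ B ∪ C = univ := eq_univ_of_forall fun x => by
    simpa only [mem_union, or_assoc] using hcover x
  have hABC : Disjoint (A ∪ B) C := disjoint_union_left.mpr ⟨hAC, hBC⟩
  have h := G.card_interedges_univ
  simp only [← huniv, G.card_interedges_union_left hABC, G.card_interedges_union_left hAB,
    G.card_interedges_union_right _ hABC, G.card_interedges_union_right _ hAB,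
    G.interedges_eq_empty_of_isIndepSet hA, G.interedges_eq_empty_of_isIndepSet hB,
    G.interedges_eq_empty_of_isIndepSet hC, card_empty, G.card_interedges_comm B A,
    G.card_interedges_comm C A, G.card_interedges_comm C B] at h
  omega

end Interedges

section TriangleFree

variable {V : Type*} {G : SimpleGraph V} [DecidableRel G.Adj]

/-- In a triangle-free graph every vertex of `C` misses an endpoint of each edge between `A` and
`B`; counting these misses from both sides gives the bound. -/
theorem card_mul_card_interedges_le (hG : G.CliqueFree 3) (A B C : Finset V) :
    #C * #(G.interedges A B) ≤
      #B * ∑ x ∈ A, #{z ∈ C | ¬G.Adj x z} + #A * ∑ y ∈ B, #{z ∈ C | ¬G.Adj y z} := by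
  classical
  calc #C * #(G.interedges A B) = ∑ _p ∈ G.interedges A B, #C := by
        rw [sum_const, smul_eq_mul, mul_comm]
    _ ≤ ∑ p ∈ G.interedges A B, (#{z ∈ C | ¬G.Adj p.1 z} + #{z ∈ C | ¬G.Adj p.2 z}) := by
        refine sum_le_sum fun p hp => (card_le_card fun z hz => ?_).trans (card_union_le _ _)
        have hpz : ¬(G.Adj p.1 z ∧ G.Adj p.2 z) := fun h =>
          hG {p.1, p.2, z} (is3Clique_triple_iff.mpr ⟨(G.mem_interedges_iff.mp hp).2.2, h.1, h.2⟩)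
        rw [mem_union, mem_filter, mem_filter]
        tauto
    _ ≤ ∑ p ∈ A ×ˢ B, (#{z ∈ C | ¬G.Adj p.1 z} + #{z ∈ C | ¬G.Adj p.2 z}) :=
        sum_le_sum_of_subset (filter_subset _ _)
    _ = #B * ∑ x ∈ A, #{z ∈ C | ¬G.Adj x z} + #A * ∑ y ∈ B, #{z ∈ C | ¬G.Adj y z} := by
        simp only [sum_product, sum_add_distrib, sum_const, smul_eq_mul]
        rw [mul_sum, mul_sum]

theorem card_interedges_add_le_of_cliqueFree_three (hG : G.CliqueFree 3) {A B C : Finset V}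
    (hA : #A ≤ #C) (hB : #B ≤ #C) :
    #(G.interedges A B) + #(G.interedges A C) + #(G.interedges B C) ≤ (#A + #B) * #C := by
  have hAC := G.card_interedges_add_sum_card_not_adj A C
  have hBC := G.card_interedges_add_sum_card_not_adj B C
  have hAB : #(G.interedges A B) ≤ ∑ x ∈ A, #{z ∈ C | ¬G.Adj x z} +
      ∑ y ∈ B, #{z ∈ C | ¬G.Adj y z} := by
    rcases (#C).eq_zero_or_pos with hC | hC
    · have := G.card_interedges_le_mul A B
      have : #A * #B = 0 := by simp [show #A = 0 by omega]
      omega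
    · refine le_of_mul_le_mul_left ((card_mul_card_interedges_le hG A B C).trans ?_) hC
      rw [mul_add]
      gcongr
  rw [add_mul]
  omega

end TriangleFree

section Weight

variable {V : Type*}

/-- `2 e(G) + e(H)`: three times the total weight when the edges of `H` weigh `1` and the other
edges of `G` weigh `2 / 3`. -/
noncomputable def pairWeight (G H : SimpleGraph V) : ℕ := 2 * G.edgeSet.ncard + H.edgeSet.ncard

/-- The amount by which `pairWeight G H` drops when all edges at `v` are deleted. -/
noncomputable def vertexWeight (G H : SimpleGraph V) (v : V) : ℕ :=
  2 * (G.neighborSet v).ncard + (H.neighborSet v).ncard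

theorem pairWeight_eq (G H : SimpleGraph V) [Fintype G.edgeSet] [Fintype H.edgeSet] :
    pairWeight G H = 2 * #G.edgeFinset + #H.edgeFinset := by
  simp only [pairWeight, Set.ncard_eq_toFinset_card', edgeFinset]

theorem vertexWeight_eq (G H : SimpleGraph V) (v : V) [Fintype (G.neighborSet v)]
    [Fintype (H.neighborSet v)] : vertexWeight G H v = 2 * G.degree v + H.degree v := by
  simp only [vertexWeight, Set.ncard_eq_toFinset_card', degree, neighborFinset]

end Weight

section ReplaceVertex

variable {V : Type*} [DecidableEq V] {G H : SimpleGraph V} {s t x : V}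

theorem replaceVertex_mono (h : H ≤ G) (s t : V) : H.replaceVertex s t ≤ G.replaceVertex s t := by
  intro x y
  simp only [replaceVertex]
  split_ifs <;> first | exact id | exact fun hxy => h hxy

theorem degree_replaceVertex_add_of_ne [Fintype V] [DecidableRel G.Adj] (hx : x ≠ t) :
    (G.replaceVertex s t).degree x + (if G.Adj x t then 1 else 0) =
      G.degree x + (if G.Adj x s then 1 else 0) := by
  simp only [degree, neighborFinset_eq_filter, card_filter]
  have hrest : ∀ y ∈ univ.erase t,
      (if (G.replaceVertex s t).Adj x y then 1 else 0) = if G.Adj x y then 1 else 0 :=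
    fun y hy => by simp only [G.adj_replaceVertex_iff_of_ne s hx (ne_of_mem_erase hy)]
  rw [← add_sum_erase _ _ (mem_univ t), ← add_sum_erase _ _ (mem_univ t), sum_congr rfl hrest]
  simp only [replaceVertex, if_neg hx, if_true]
  omega

variable [Fintype V]

theorem vertexWeight_replaceVertex_add_of_ne [DecidableRel G.Adj] [DecidableRel H.Adj]
    (hx : x ≠ t) :
    vertexWeight (G.replaceVertex s t) (H.replaceVertex s t) x +
        (2 * (if G.Adj x t then 1 else 0) + if H.Adj x t then 1 else 0) =
      vertexWeight G H x + (2 * (if G.Adj x s then 1 else 0) + if H.Adj x s then 1 else 0) := by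
  have hG := G.degree_replaceVertex_add_of_ne (s := s) hx
  have hH := H.degree_replaceVertex_add_of_ne (s := s) hx
  simp only [vertexWeight_eq]
  omega

theorem pairWeight_replaceVertex_add (hHG : H ≤ G) (hst : ¬G.Adj s t) :
    pairWeight (G.replaceVertex s t) (H.replaceVertex s t) + vertexWeight G H t =
      pairWeight G H + vertexWeight G H s := by
  classical
  have hG := G.card_edgeFinset_replaceVertex_of_not_adj hst
  have hH := H.card_edgeFinset_replaceVertex_of_not_adj fun h => hst (hHG h)
  have := G.degree_le_card_edgeFinset t
  have := H.degree_le_card_edgeFinset t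
  simp only [pairWeight_eq, vertexWeight_eq]
  omega

/-- Zykov symmetrisation for a pair of graphs: if `v` misses both ends of the edge `uw`, cloning
onto `v` the heavier of `u` and `w`, or else cloning `v` onto both, increases `pairWeight`. -/
theorem exists_pairWeight_lt_of_not_isCompleteMultipartite {k l : ℕ} (hHG : H ≤ G)
    (hG : G.CliqueFree k) (hH : H.CliqueFree l) (hcm : ¬G.IsCompleteMultipartite) :
    ∃ G' H' : SimpleGraph V, H' ≤ G' ∧ G'.CliqueFree k ∧ H'.CliqueFree l ∧
      pairWeight G H < pairWeight G' H' := by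
  classical
  obtain ⟨v, u, w, hp⟩ := exists_isPathGraph3Compl_of_not_isCompleteMultipartite hcm
  have hvu_ne : v ≠ u := hp.ne_fst
  obtain ⟨huw, hvu, hvw⟩ := hp
  by_cases hu : vertexWeight G H v < vertexWeight G H u
  · refine ⟨_, _, replaceVertex_mono hHG u v, hG.replaceVertex u v, hH.replaceVertex u v, ?_⟩
    have := pairWeight_replaceVertex_add hHG fun h => hvu h.symm
    omega
  by_cases hw : vertexWeight G H v < vertexWeight G H w
  · refine ⟨_, _, replaceVertex_mono hHG w v, hG.replaceVertex w v, hH.replaceVertex w v, ?_⟩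
    have := pairWeight_replaceVertex_add hHG fun h => hvw h.symm
    omega
  have hwu : w ≠ u := huw.ne.symm
  have hvw' : ¬(G.replaceVertex v u).Adj v w := by
    rwa [G.adj_replaceVertex_iff_of_ne v hvu_ne hwu]
  refine ⟨(G.replaceVertex v u).replaceVertex v w, (H.replaceVertex v u).replaceVertex v w,
    replaceVertex_mono (replaceVertex_mono hHG v u) v w,
    (hG.replaceVertex v u).replaceVertex v w, (hH.replaceVertex v u).replaceVertex v w, ?_⟩
  have h₁ := pairWeight_replaceVertex_add hHG hvu
  have h₂ := pairWeight_replaceVertex_add (replaceVertex_mono hHG v u) hvw'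
  have hv := vertexWeight_replaceVertex_add_of_ne (G := G) (H := H) (s := v) hvu_ne
  have hw' := vertexWeight_replaceVertex_add_of_ne (G := G) (H := H) (s := v) hwu
  have hHvu : ¬H.Adj v u := fun h => hvu (hHG h)
  have hGwv : ¬G.Adj w v := fun h => hvw h.symm
  have hHwv : ¬H.Adj w v := fun h => hGwv (hHG h)
  simp only [hvu, hHvu, G.loopless.irrefl, H.loopless.irrefl, huw.symm, hGwv, hHwv, if_true,
    if_false] at hv hw'
  omega

theorem exists_isCompleteMultipartite_pairWeight_le {k l : ℕ} (hHG : H ≤ G)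
    (hG : G.CliqueFree k) (hH : H.CliqueFree l) :
    ∃ G' H' : SimpleGraph V, H' ≤ G' ∧ G'.CliqueFree k ∧ H'.CliqueFree l ∧
      G'.IsCompleteMultipartite ∧ pairWeight G H ≤ pairWeight G' H' := by
  obtain ⟨⟨G', H'⟩, ⟨hHG', hG', hH'⟩, hmax⟩ := Set.exists_max_image
    {p : SimpleGraph V × SimpleGraph V | p.2 ≤ p.1 ∧ p.1.CliqueFree k ∧ p.2.CliqueFree l}
    (fun p => pairWeight p.1 p.2) (Set.toFinite _) ⟨(G, H), hHG, hG, hH⟩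
  refine ⟨G', H', hHG', hG', hH', ?_, hmax (G, H) ⟨hHG, hG, hH⟩⟩
  by_contra hcm
  obtain ⟨G'', H'', hHG'', hG'', hH'', hlt⟩ :=
    exists_pairWeight_lt_of_not_isCompleteMultipartite hHG' hG' hH' hcm
  exact (hmax (G'', H'') ⟨hHG'', hG'', hH''⟩).not_gt hlt

end ReplaceVertex

section Bound

variable {V : Type*} [Fintype V] [DecidableEq V] {G H : SimpleGraph V}

theorem ten_mul_pairWeight_le_of_isIndepSet (hHG : H ≤ G) (hH : H.CliqueFree 3)
    {A B C : Finset V} (hcover : ∀ x, x ∈ A ∨ x ∈ B ∨ x ∈ C)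
    (hAB : Disjoint A B) (hAC : Disjoint A C) (hBC : Disjoint B C)
    (hA : G.IsIndepSet A) (hB : G.IsIndepSet B) (hC : G.IsIndepSet C) :
    10 * pairWeight G H ≤ 9 * Fintype.card V ^ 2 := by
  classical
  wlog hCmax : #A ≤ #C ∧ #B ≤ #C generalizing A B C
  · rcases le_total #B #A with hBA | hAB'
    · exact this (fun x => by have := hcover x; tauto) hBC hAB.symm hAC.symm hB hC hA (by omega)
    · exact this (fun x => by have := hcover x; tauto) hAC hAB hBC.symm hA hC hB (by omega)
  have hHind : ∀ {s : Finset V}, G.IsIndepSet s → H.IsIndepSet s :=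
    fun hs => hs.mono' fun _ _ h h' => h (hHG h')
  have hcard : Fintype.card V = #A + #B + #C := by
    rw [← card_univ, ← card_union_of_disjoint hAB, ← card_union_of_disjoint
      (disjoint_union_left.mpr ⟨hAC, hBC⟩)]
    exact congrArg card (eq_univ_of_forall fun x => by
      simpa only [mem_union, or_assoc] using hcover x).symm
  rw [pairWeight_eq, G.card_edgeFinset_eq_of_isIndepSet hcover hAB hAC hBC hA hB hC,
    H.card_edgeFinset_eq_of_isIndepSet hcover hAB hAC hBC (hHind hA) (hHind hB) (hHind hC), hcard]
  have hH' := card_interedges_add_le_of_cliqueFree_three hH hCmax.1 hCmax.2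
  have := G.card_interedges_le_mul A B
  have := G.card_interedges_le_mul A C
  have := G.card_interedges_le_mul B C
  -- `9 (a + b + c)² - 20 (ab + ac + bc) - 10 (a + b) c = (2a + 2b - 3c)² + 5 (a - b)²`, which
  -- vanishes for the extremal part sizes `a = b = 3n / 10`, `c = 4n / 10`.
  have key : 20 * (#A * #B + #A * #C + #B * #C) + 10 * ((#A + #B) * #C) ≤
      9 * (#A + #B + #C) ^ 2 := by
    zify
    nlinarith [sq_nonneg (2 * (#A : ℤ) + 2 * #B - 3 * #C), sq_nonneg ((#A : ℤ) - #B)]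
  linarith

theorem ten_mul_pairWeight_le_of_colorable (hG : G.Colorable 3) (hHG : H ≤ G)
    (hH : H.CliqueFree 3) : 10 * pairWeight G H ≤ 9 * Fintype.card V ^ 2 := by
  classical
  obtain ⟨c⟩ := hG
  let P (i : Fin 3) : Finset V := {x | c x = i}
  have hP : ∀ i, G.IsIndepSet (P i) := fun i x hx y hy _ hxy => by
    simp only [P, coe_filter, mem_univ, true_and, Set.mem_ofPred_eq] at hx hy
    exact c.valid hxy (hx.trans hy.symm)
  have hdisj : ∀ i j, i ≠ j → Disjoint (P i) (P j) := fun i j hij =>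
    disjoint_filter.mpr fun _ _ hi hj => hij (hi.symm.trans hj)
  refine ten_mul_pairWeight_le_of_isIndepSet hHG hH (A := P 0) (B := P 1) (C := P 2)
    (fun x => ?_) (hdisj 0 1 (by decide)) (hdisj 0 2 (by decide)) (hdisj 1 2 (by decide))
    (hP 0) (hP 1) (hP 2)
  simp only [P, mem_filter, mem_univ, true_and]
  generalize c x = i
  fin_cases i <;> simp

theorem ten_mul_pairWeight_le (hHG : H ≤ G) (hG : G.CliqueFree 4) (hH : H.CliqueFree 3) :
    10 * pairWeight G H ≤ 9 * Fintype.card V ^ 2 := by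
  obtain ⟨G', H', hHG', hG', hH', hcm, hle⟩ := exists_isCompleteMultipartite_pairWeight_le hHG hG hH
  calc 10 * pairWeight G H ≤ 10 * pairWeight G' H' := Nat.mul_le_mul_left 10 hle
    _ ≤ 9 * Fintype.card V ^ 2 :=
      ten_mul_pairWeight_le_of_colorable (hcm.colorable_of_cliqueFree hG') hHG' hH'

end Bound

section EdgeWeights

variable {V : Type*} {G : SimpleGraph V} {w : Sym2 V → ℝ}

theorem cliqueFree_three_deleteEdges_of_not_exists {a : ℝ}
    (h : ¬∃ x y z, G.Adj x y ∧ G.Adj x z ∧ G.Adj y z ∧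
      a < w s(x, y) ∧ a < w s(x, z) ∧ a < w s(y, z)) :
    (G.deleteEdges {e | w e ≤ a}).CliqueFree 3 := by
  classical
  intro s hs
  obtain ⟨x, y, z, hxy, hxz, hyz, -⟩ := is3Clique_iff.mp hs
  simp only [deleteEdges_adj, Set.mem_ofPred_eq, not_le] at hxy hxz hyz
  exact h ⟨x, y, z, hxy.1, hxz.1, hyz.1, hxy.2, hxz.2, hyz.2⟩

theorem sum_le_mul_card_add_mul_card_deleteEdges [Fintype G.edgeSet] (a : ℝ)
    [Fintype (G.deleteEdges {e | w e ≤ a}).edgeSet] (hw : ∀ e ∈ G.edgeFinset, w e ≤ 1) :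
    ∑ e ∈ G.edgeFinset, w e ≤
      a * #G.edgeFinset + (1 - a) * #(G.deleteEdges {e | w e ≤ a}).edgeFinset := by
  classical
  have hheavy : (G.deleteEdges {e | w e ≤ a}).edgeFinset = {e ∈ G.edgeFinset | a < w e} := by
    ext e
    simp [edgeSet_deleteEdges]
  calc ∑ e ∈ G.edgeFinset, w e ≤ ∑ e ∈ G.edgeFinset, (a + (1 - a) * if a < w e then 1 else 0) := by
        refine sum_le_sum fun e he => ?_
        split_ifs with h
        · linarith [hw e he]
        · linarith [not_lt.mp h]
    _ = a * #G.edgeFinset + (1 - a) * #(G.deleteEdges {e | w e ≤ a}).edgeFinset := by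
        rw [sum_add_distrib, sum_const, ← mul_sum, sum_boole, hheavy, nsmul_eq_mul, mul_comm]

end EdgeWeights

end SimpleGraph

open SimpleGraph in
theorem weighted_turan_K4_free_no_heavy_23 :
    ∀ ε : ℝ, 0 < ε → ∃ n₀ : ℕ, ∀ n : ℕ, n₀ ≤ n →
      ∀ G : SimpleGraph (Fin n), G.CliqueFree 4 →
        ∀ w : Sym2 (Fin n) → ℝ,
          (∀ e ∈ edgeFinset' G, 0 ≤ w e ∧ w e ≤ 1) →
          (¬ ∃ x y z : Fin n, G.Adj x y ∧ G.Adj x z ∧ G.Adj y z ∧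
            2 / 3 < w s(x, y) ∧ 2 / 3 < w s(x, z) ∧ 2 / 3 < w s(y, z)) →
          ∑ e ∈ edgeFinset' G, w e ≤ (3 / 10 + ε) * n ^ 2 := by
  intro ε hε
  refine ⟨0, fun n _ G hG w hw hheavy => ?_⟩
  classical
  have hE : edgeFinset' G = G.edgeFinset := by rw [edgeFinset']
  rw [hE] at hw ⊢
  have hsum := sum_le_mul_card_add_mul_card_deleteEdges (2 / 3) fun e he => (hw e he).2
  have hbound := ten_mul_pairWeight_le (deleteEdges_le _) hG
    (cliqueFree_three_deleteEdges_of_not_exists hheavy)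
  rw [pairWeight_eq, Fintype.card_fin] at hbound
  have hbound' : 10 * (2 * (#G.edgeFinset : ℝ) +
      #(G.deleteEdges {e | w e ≤ 2 / 3}).edgeFinset) ≤ 9 * n ^ 2 := by exact_mod_cast hbound
  calc ∑ e ∈ G.edgeFinset, w e
      ≤ 2 / 3 * #G.edgeFinset + (1 - 2 / 3) * #(G.deleteEdges {e | w e ≤ 2 / 3}).edgeFinset := hsum
    _ ≤ 3 / 10 * n ^ 2 := by linarith
    _ ≤ (3 / 10 + ε) * n ^ 2 := by gcongr; linarith
end

section
/- (Weighted Turán bound for K₄-free graphs without 3/4-heavy triangles.) For every ε > 0 there exists n₀ such that the following holds for all n ≥ n₀. Let G be a K₄-free graph on n vertices with a weight function w : E(G) → [0,1], and suppose that G contains no triangle all three of whose edges have weight strictly greater than 3/4. Then Σ_{e ∈ E(G)} w(e) ≤ (4/13 + ε)·n². -/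
open Finset

lemma dsum {n : ℕ} (c : Fin n → ℝ) (a : Fin n) :
    (∑ p : Fin n, (if p = a then (1:ℝ) else 0) * c p) = c a := by
  simp [ite_mul]

lemma tri_bound (a b c p q r : ℝ) (ha : a ≤ 2) (hb : b ≤ 2) (hc : c ≤ 3/2)
    (hp : 0 ≤ p) (hq : 0 ≤ q) (hr : 0 ≤ r) (hsum : p + q + r = 1) :
    2*(a*(p*q) + b*(p*r) + c*(q*r)) ≤ 16/13 := by
  have h1 : (2 - a) * (p*q) ≥ 0 := mul_nonneg (by linarith) (mul_nonneg hp hq)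
  have h2 : (2 - b) * (p*r) ≥ 0 := mul_nonneg (by linarith) (mul_nonneg hp hr)
  have h3 : (3/2 - c) * (q*r) ≥ 0 := mul_nonneg (by linarith) (mul_nonneg hq hr)
  have key : 4*(p*q) + 4*(p*r) + 3*(q*r) ≤ 16/13 := by
    have hp' : p = 1 - q - r := by linarith
    subst hp'
    nlinarith [sq_nonneg (q + r - 8/13), sq_nonneg (q - r)]
  nlinarith [h1, h2, h3, key]

lemma key_lemma {n : ℕ} (G : SimpleGraph (Fin n)) (hG : G.CliqueFree 4)
    (g : Fin n → Fin n → ℝ)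
    (hsymm : ∀ u v, g u v = g v u)
    (hzero : ∀ u v, ¬ G.Adj u v → g u v = 0)
    (hval : ∀ u v, G.Adj u v → g u v = 2 ∨ g u v = 3/2)
    (hnoheavy : ∀ a b c, G.Adj a b → G.Adj a c → G.Adj b c →
      ¬ (g a b = 2 ∧ g a c = 2 ∧ g b c = 2)) :
    ∀ (k : ℕ) (x : Fin n → ℝ),
      (Finset.univ.filter fun v => x v ≠ 0).card = k →
      (∀ v, 0 ≤ x v) → (∑ v, x v) = 1 →
      (∑ u, ∑ v, g u v * x u * x v) ≤ 16/13 := by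
  intro k
  induction k using Nat.strong_induction_on with
  | _ k ih =>
  intro x hk hx0 hxsum
  set s := Finset.univ.filter fun v => x v ≠ 0 with hs
  have hxs : ∀ u, u ∉ s → x u = 0 := by
    intro u hu
    by_contra h
    exact hu (Finset.mem_filter.2 ⟨Finset.mem_univ u, h⟩)
  by_cases hclique : ∀ u ∈ s, ∀ v ∈ s, u ≠ v → G.Adj u v
  · -- support is a clique, so has ≤ 3 elements
    have hF : (∑ u, ∑ v, g u v * x u * x v) = ∑ u ∈ s, ∑ v ∈ s, g u v * x u * x v := by
      rw [← Finset.sum_subset (Finset.subset_univ s) (fun u _ hu => by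
        simp [hxs u hu])]
      refine Finset.sum_congr rfl (fun u _ => ?_)
      rw [← Finset.sum_subset (Finset.subset_univ s) (fun v _ hv => by
        simp [hxs v hv])]
    have hsum_s : ∑ v ∈ s, x v = 1 := by
      rw [Finset.sum_subset (Finset.subset_univ s) (fun v _ hv => hxs v hv)]
      exact hxsum
    have hcard3 : s.card ≤ 3 := by
      by_contra h
      push_neg at h
      obtain ⟨t, hts, ht4⟩ := Finset.exists_subset_card_eq h
      exact hG t ⟨fun u hu v hv huv => hclique u (hts hu) v (hts hv) huv, ht4⟩
    clear_value s
    rw [hF]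
    rcases (by omega : s.card = 0 ∨ s.card = 1 ∨ s.card = 2 ∨ s.card = 3) with h|h|h|h
    · exfalso
      rw [Finset.card_eq_zero] at h
      rw [h] at hsum_s
      simp at hsum_s
    · obtain ⟨a, rfl⟩ := Finset.card_eq_one.1 h
      simp only [Finset.sum_singleton]
      rw [hzero a a (G.irrefl)]
      norm_num
    · obtain ⟨a, b, hab, rfl⟩ := Finset.card_eq_two.1 h
      have hadj : G.Adj a b := hclique a (by simp) b (by simp) hab
      have hval' : g a b ≤ 2 := by rcases hval a b hadj with h'|h' <;> linarith
      have hsum2 : x a + x b = 1 := by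
        rw [Finset.sum_pair hab] at hsum_s; exact hsum_s
      rw [Finset.sum_pair hab, Finset.sum_pair hab, Finset.sum_pair hab,
        hzero a a G.irrefl, hzero b b G.irrefl, hsymm b a]
      nlinarith [mul_nonneg (hx0 a) (hx0 b), sq_nonneg (x a - x b),
        mul_nonneg (sub_nonneg.2 hval') (mul_nonneg (hx0 a) (hx0 b))]
    · obtain ⟨a, b, c, hab, hac, hbc, rfl⟩ := Finset.card_eq_three.1 h
      have hA : G.Adj a b := hclique a (by simp) b (by simp) hab
      have hB : G.Adj a c := hclique a (by simp) c (by simp) hac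
      have hC : G.Adj b c := hclique b (by simp) c (by simp) hbc
      have expand : ∀ f : Fin n → ℝ, ∑ u ∈ ({a,b,c} : Finset (Fin n)), f u
          = f a + (f b + f c) := by
        intro f
        rw [Finset.sum_insert (by simp [hab, hac]), Finset.sum_pair hbc]
      rw [expand] at hsum_s
      simp only [expand]
      rw [hzero a a G.irrefl, hzero b b G.irrefl, hzero c c G.irrefl,
        hsymm b a, hsymm c a, hsymm c b]
      have hub : ∀ u v, G.Adj u v → g u v ≤ 2 := by
        intro u v h'; rcases hval u v h' with h'|h' <;> linarith
      -- case on which edge is light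
      rcases hval b c hC with h3|h3
      · rcases hval a c hB with h2|h2
        · rcases hval a b hA with h1|h1
          · exact absurd ⟨h1, h2, h3⟩ (hnoheavy a b c hA hB hC)
          · -- g a b = 3/2 : light edge ab, apex c
            have := tri_bound (g a c) (g b c) (g a b) (x c) (x a) (x b)
              (hub a c hB) (hub b c hC) (by linarith) (hx0 c) (hx0 a) (hx0 b)
              (by linarith)
            linarith [this]
        · -- g a c = 3/2 : apex b
          have := tri_bound (g a b) (g b c) (g a c) (x b) (x a) (x c)
            (hub a b hA) (hub b c hC) (by linarith) (hx0 b) (hx0 a) (hx0 c)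
            (by linarith)
          nlinarith [this]
      · -- g b c = 3/2 : apex a
        have := tri_bound (g a b) (g a c) (g b c) (x a) (x b) (x c)
          (hub a b hA) (hub a c hB) (by linarith) (hx0 a) (hx0 b) (hx0 c)
          (by linarith)
        nlinarith [this]
  · push_neg at hclique
    obtain ⟨u0, hu0, v0, hv0, huv0, hnadj0⟩ := hclique
    have main : ∀ u v : Fin n, u ∈ s → v ∈ s → u ≠ v → ¬ G.Adj u v →
        (∑ q, g v q * x q) ≤ (∑ q, g u q * x q) →
        (∑ p, ∑ q, g p q * x p * x q) ≤ 16/13 := by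
      intro u v hu hv huv hnadj hSuv
      set y : Fin n → ℝ := fun w =>
        x w + x v * ((if w = u then (1:ℝ) else 0) - (if w = v then 1 else 0)) with hy
      have hyu : y u = x u + x v := by simp [hy, huv]
      have hyv : y v = 0 := by
        simp only [hy, if_neg (Ne.symm huv), if_pos]; ring
      have hyw : ∀ w, w ≠ u → w ≠ v → y w = x w := by
        intro w h1 h2; simp [hy, h1, h2]
      have hy0 : ∀ w, 0 ≤ y w := by
        intro w
        by_cases h1 : w = u
        · rw [h1, hyu]; have h2 := hx0 u; have h3 := hx0 v; linarith
        · by_cases h2 : w = v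
          · rw [h2, hyv]
          · rw [hyw w h1 h2]; exact hx0 w
      have hysum : ∑ w, y w = 1 := by
        simp only [hy]
        rw [Finset.sum_add_distrib, ← Finset.mul_sum, Finset.sum_sub_distrib]
        rw [Finset.sum_ite_eq' Finset.univ u (fun _ => (1:ℝ)),
          Finset.sum_ite_eq' Finset.univ v (fun _ => (1:ℝ))]
        simp [hxsum]
      -- support shrinks
      have hsupp : (Finset.univ.filter fun w => y w ≠ 0) ⊆ s.erase v := by
        intro w hw
        have hwne : y w ≠ 0 := (Finset.mem_filter.1 hw).2
        by_cases h2 : w = v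
        · subst h2; exact absurd hyv hwne
        · refine Finset.mem_erase.2 ⟨h2, ?_⟩
          by_cases h1 : w = u
          · subst h1; exact hu
          · rw [hyw w h1 h2] at hwne
            exact Finset.mem_filter.2 ⟨Finset.mem_univ w, hwne⟩
      have hcard : (Finset.univ.filter fun w => y w ≠ 0).card < k := by
        have h1 : (Finset.univ.filter fun w => y w ≠ 0).card ≤ (s.erase v).card :=
          Finset.card_le_card hsupp
        have h2 : (s.erase v).card = k - 1 := by rw [Finset.card_erase_of_mem hv, hk]
        have h3 : 0 < k := by rw [← hk]; exact Finset.card_pos.2 ⟨v, hv⟩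
        omega
      have hyF := ih _ hcard y rfl hy0 hysum
      -- F y = F x + 2 t (Au - Av)
      set A : Fin n → ℝ := fun p => ∑ q, g p q * x q with hA
      have pull : ∀ z : Fin n → ℝ, (∑ p, ∑ q, g p q * z p * z q)
          = ∑ p, z p * (∑ q, g p q * z q) := by
        intro z
        refine Finset.sum_congr rfl (fun p _ => ?_)
        rw [Finset.mul_sum]
        exact Finset.sum_congr rfl (fun q _ => by ring)
      have hgu : g u u = 0 := hzero u u G.irrefl
      have hgv : g v v = 0 := hzero v v G.irrefl
      have hguv : g u v = 0 := hzero u v hnadj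
      have hgvu : g v u = 0 := hzero v u (fun h' => hnadj h'.symm)
      have hAy : ∀ p, (∑ q, g p q * y q) = A p + x v * (g p u - g p v) := by
        intro p
        have : ∀ q, g p q * y q = g p q * x q
            + x v * ((if q = u then (1:ℝ) else 0) * g p q - (if q = v then 1 else 0) * g p q) := by
          intro q; simp only [hy]; ring
        rw [Finset.sum_congr rfl (fun q _ => this q), Finset.sum_add_distrib,
          ← Finset.mul_sum, Finset.sum_sub_distrib, dsum (g p) u, dsum (g p) v]
      have split : ∀ c : Fin n → ℝ, (∑ p, y p * c p) = (∑ p, x p * c p) + x v * (c u - c v) := by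
        intro c
        have : ∀ p, y p * c p = x p * c p
            + x v * ((if p = u then (1:ℝ) else 0) * c p - (if p = v then 1 else 0) * c p) := by
          intro p; simp only [hy]; ring
        rw [Finset.sum_congr rfl (fun p _ => this p), Finset.sum_add_distrib,
          ← Finset.mul_sum, Finset.sum_sub_distrib, dsum c u, dsum c v]
      have hCx : (∑ p, x p * (g p u - g p v)) = A u - A v := by
        have h1 : (∑ p, x p * (g p u - g p v)) = (∑ p, g u p * x p) - (∑ p, g v p * x p) := by
          rw [← Finset.sum_sub_distrib]
          refine Finset.sum_congr rfl (fun p _ => ?_)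
          rw [hsymm u p, hsymm v p]; ring
        rw [h1, hA]
      have hFy : (∑ p, ∑ q, g p q * y p * y q)
          = (∑ p, ∑ q, g p q * x p * x q) + 2 * x v * (A u - A v) := by
        rw [pull y, pull x]
        calc ∑ p, y p * (∑ q, g p q * y q)
            = ∑ p, (y p * A p + x v * (y p * (g p u - g p v))) := by
              refine Finset.sum_congr rfl (fun p _ => ?_)
              rw [hAy p]; ring
          _ = (∑ p, y p * A p) + x v * (∑ p, y p * (g p u - g p v)) := by
              rw [Finset.sum_add_distrib, ← Finset.mul_sum]
          _ = ((∑ p, x p * A p) + x v * (A u - A v))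
              + x v * ((∑ p, x p * (g p u - g p v)) + x v * ((g u u - g u v) - (g v u - g v v))) := by
              rw [split A, split (fun p => g p u - g p v)]
          _ = (∑ p, x p * A p) + 2 * x v * (A u - A v) := by
              rw [hCx, hgu, hgv, hguv, hgvu]; ring
      have hAuv : A v ≤ A u := hSuv
      have htpos : 0 ≤ x v := hx0 v
      calc (∑ p, ∑ q, g p q * x p * x q)
          = (∑ p, ∑ q, g p q * y p * y q) - 2 * x v * (A u - A v) := by rw [hFy]; ring
        _ ≤ 16/13 := by nlinarith [mul_nonneg htpos (sub_nonneg.2 hAuv)]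
    rcases le_total (∑ q, g v0 q * x q) (∑ q, g u0 q * x q) with h|h
    · exact main u0 v0 hu0 hv0 huv0 hnadj0 h
    · exact main v0 u0 hv0 hu0 (Ne.symm huv0) (fun h' => hnadj0 h'.symm) h


lemma pair_sum_eq (n : ℕ) (G : SimpleGraph (Fin n)) [DecidableRel G.Adj]
    (f : Sym2 (Fin n) → ℝ) :
    (∑ p : Fin n, ∑ q : Fin n, if G.Adj p q then f s(p, q) else 0)
      = 2 * ∑ e ∈ G.edgeFinset, f e := by
  classical
  have h1 : (∑ p : Fin n, ∑ q : Fin n, if G.Adj p q then f s(p, q) else 0)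
      = ∑ z ∈ (Finset.univ ×ˢ Finset.univ).filter (fun z : Fin n × Fin n => G.Adj z.1 z.2),
          f s(z.1, z.2) := by
    rw [Finset.sum_filter, Finset.sum_product]
  have h2 : (∑ z ∈ (Finset.univ ×ˢ Finset.univ).filter (fun z : Fin n × Fin n => G.Adj z.1 z.2),
          f s(z.1, z.2)) = ∑ d : G.Dart, f d.edge := by
    refine Finset.sum_bij' (fun z hz => (⟨z, (Finset.mem_filter.1 hz).2⟩ : G.Dart))
      (fun d _ => d.toProd) (fun z hz => Finset.mem_univ _)
      (fun d _ => Finset.mem_filter.2 ⟨by simp, d.adj⟩) (fun z hz => rfl)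
      (fun d _ => rfl) (fun z hz => rfl)
  have h3 : (∑ d : G.Dart, f d.edge) = ∑ e ∈ G.edgeFinset, 2 * f e := by
    rw [← Finset.sum_fiberwise_of_maps_to' (g := SimpleGraph.Dart.edge)
      (t := G.edgeFinset) (fun d _ => by rw [SimpleGraph.mem_edgeFinset]; exact d.edge_mem) f]
    refine Finset.sum_congr rfl (fun e he => ?_)
    rw [Finset.sum_const, G.dart_edge_fiber_card e (SimpleGraph.mem_edgeFinset.1 he)]
    simp [two_mul]
  rw [h1, h2, h3, Finset.mul_sum]

theorem weighted_turan_K4_free_no_heavy_34 :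
    ∀ ε : ℝ, 0 < ε → ∃ n₀ : ℕ, ∀ n : ℕ, n₀ ≤ n →
      ∀ G : SimpleGraph (Fin n), G.CliqueFree 4 →
        ∀ w : Sym2 (Fin n) → ℝ,
          (∀ e ∈ edgeFinset' G, 0 ≤ w e ∧ w e ≤ 1) →
          (¬ ∃ x y z : Fin n, G.Adj x y ∧ G.Adj x z ∧ G.Adj y z ∧
            3 / 4 < w s(x, y) ∧ 3 / 4 < w s(x, z) ∧ 3 / 4 < w s(y, z)) →
          ∑ e ∈ edgeFinset' G, w e ≤ (4 / 13 + ε) * n ^ 2 := by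
  intro ε hε
  refine ⟨1, fun n hn G hG4 w hw hnh => ?_⟩
  classical
  have hEF : edgeFinset' G = G.edgeFinset := by
    unfold edgeFinset'
    congr 1
  rw [hEF] at hw ⊢
  -- the weight pattern
  set g : Fin n → Fin n → ℝ := fun u v =>
    if G.Adj u v then (if 3/4 < w s(u, v) then 2 else 3/2) else 0 with hg
  have hsymm : ∀ u v, g u v = g v u := by
    intro u v
    simp only [hg]
    rw [show s(u, v) = s(v, u) from Sym2.eq_swap, G.adj_comm]
  have hzero : ∀ u v, ¬ G.Adj u v → g u v = 0 := by
    intro u v h; simp [hg, h]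
  have hval : ∀ u v, G.Adj u v → g u v = 2 ∨ g u v = 3/2 := by
    intro u v h
    simp only [hg, if_pos h]
    by_cases h4 : 3/4 < w s(u, v)
    · left; rw [if_pos h4]
    · right; rw [if_neg h4]
  have heavy_of_two : ∀ u v, G.Adj u v → g u v = 2 → 3/4 < w s(u, v) := by
    intro u v h h2
    by_contra h4
    rw [hg] at h2
    simp only [if_pos h, if_neg h4] at h2
    norm_num at h2
  have hnoheavy : ∀ a b c, G.Adj a b → G.Adj a c → G.Adj b c →
      ¬ (g a b = 2 ∧ g a c = 2 ∧ g b c = 2) := by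
    rintro a b c hab hac hbc ⟨h1, h2, h3⟩
    exact hnh ⟨a, b, c, hab, hac, hbc, heavy_of_two a b hab h1,
      heavy_of_two a c hac h2, heavy_of_two b c hbc h3⟩
  have hn0 : (0:ℝ) < n := by
    have : (1:ℝ) ≤ n := by exact_mod_cast hn
    linarith
  -- apply key lemma with uniform x
  have hkey := key_lemma G hG4 g hsymm hzero hval hnoheavy _
    (fun _ => (n:ℝ)⁻¹) rfl (fun _ => by positivity)
    (by
      rw [Finset.sum_const, Finset.card_univ, Fintype.card_fin, nsmul_eq_mul]
      field_simp)
  have heq : (∑ u : Fin n, ∑ v : Fin n, g u v * (n:ℝ)⁻¹ * (n:ℝ)⁻¹)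
      = (∑ u : Fin n, ∑ v : Fin n, g u v) * ((n:ℝ)⁻¹ * (n:ℝ)⁻¹) := by
    rw [Finset.sum_mul]
    refine Finset.sum_congr rfl (fun u _ => ?_)
    rw [Finset.sum_mul]
    exact Finset.sum_congr rfl (fun v _ => by ring)
  rw [heq] at hkey
  have hT : (∑ u : Fin n, ∑ v : Fin n, g u v) ≤ 16/13 * (n:ℝ)^2 := by
    have h2 := mul_le_mul_of_nonneg_right hkey (by positivity : (0:ℝ) ≤ (n:ℝ)^2)
    calc (∑ u : Fin n, ∑ v : Fin n, g u v)
        = (∑ u : Fin n, ∑ v : Fin n, g u v) * ((n:ℝ)⁻¹ * (n:ℝ)⁻¹) * (n:ℝ)^2 := by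
          have hinv : ((n:ℝ)⁻¹ * (n:ℝ)⁻¹) * (n:ℝ)^2 = 1 := by
            field_simp
          rw [mul_assoc, hinv, mul_one]
      _ ≤ 16/13 * (n:ℝ)^2 := h2
  -- half-weight function on edges
  set f : Sym2 (Fin n) → ℝ := Sym2.lift ⟨fun u v => g u v / 2, fun u v => by show g u v / 2 = g v u / 2; rw [hsymm u v]⟩
    with hf
  have hfs : ∀ u v, f s(u, v) = g u v / 2 := fun u v => Sym2.lift_mk _ u v
  have hwf : ∀ e ∈ G.edgeFinset, w e ≤ f e := by
    intro e he
    induction e with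
    | h u v =>
      have hadj : G.Adj u v := by
        rw [SimpleGraph.mem_edgeFinset, SimpleGraph.mem_edgeSet] at he
        exact he
      rw [hfs u v]
      by_cases h4 : 3/4 < w s(u, v)
      · have : g u v = 2 := by simp [hg, hadj, h4]
        rw [this]
        have := (hw _ he).2
        linarith
      · have : g u v = 3/2 := by simp [hg, hadj, h4]
        rw [this]
        push_neg at h4
        linarith
  have hsum_f : (2:ℝ) * ∑ e ∈ G.edgeFinset, f e = (∑ u : Fin n, ∑ v : Fin n, g u v) / 2 := by
    rw [← pair_sum_eq n G f]
    rw [Finset.sum_div]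
    refine Finset.sum_congr rfl (fun u _ => ?_)
    rw [Finset.sum_div]
    refine Finset.sum_congr rfl (fun v _ => ?_)
    by_cases h : G.Adj u v
    · rw [if_pos h, hfs u v]
    · rw [if_neg h, hzero u v h, zero_div]
  have hfin : ∑ e ∈ G.edgeFinset, f e ≤ 4/13 * (n:ℝ)^2 := by nlinarith [hsum_f, hT]
  calc ∑ e ∈ G.edgeFinset, w e ≤ ∑ e ∈ G.edgeFinset, f e := Finset.sum_le_sum hwf
    _ ≤ 4/13 * (n:ℝ)^2 := hfin
    _ ≤ (4/13 + ε) * (n:ℝ)^2 := by nlinarith [sq_nonneg (n:ℝ)]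
end
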